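/- arXiv:2105.01310 — 5 statements merged into one kernel-verified Lean document; each statement's English description precedes it below -/
import Mathlib

section
/- E[T] = 3ab. -/
open MeasureTheory ProbabilityTheory Filter Topology
open scoped ENNReal

/-!
Kill the walk `Z n = (A n, B n)` at the first tie `T` and let `e n = E[A n * B n ; T > n]`.
Away from the axes, a uniform step lowers `x * y` by `1/3` on average and leaves `x * y * (x + y)`
unchanged on average, and both polynomials vanish on the axes. Hence
`3 * e (n + 1) + P(T > n) = 3 * e n`, i.e. `∑_{k < n} P(T > k) + 3 * e n = 3 * a * b`, while
`E[A n * B n * (A n + B n) ; T > n] = a * b * (a + b)` for all `n`. Since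
`K * x * y ≤ K ^ 3 + x * y * (x + y)`, this cubic bound makes `A n * B n` uniformly integrable,
so `e n → 0` and `E[T] = ∑ P(T > n) = 3 * a * b`.
-/

theorem lintegral_comp_eq_sum_of_indep {Ω β : Type*} {m mΩ : MeasurableSpace Ω}
    [MeasurableSpace β] [MeasurableSingletonClass β] {μ : Measure Ω} {Y : Ω → β}
    (hm : m ≤ mΩ) (hY : Measurable Y) (hind : Indep m (MeasurableSpace.comap Y ‹_›) μ)
    {S : Finset β} (hS : ∀ᵐ ω ∂μ, Y ω ∈ S) {H : β → Ω → ℝ≥0∞} (hH : ∀ v, Measurable[m] (H v)) :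
    ∫⁻ ω, H (Y ω) ω ∂μ = ∑ v ∈ S, (∫⁻ ω, H v ω ∂μ) * μ (Y ⁻¹' {v}) := by
  have hfiber : ∀ v, Measurable[MeasurableSpace.comap Y ‹_›] ((Y ⁻¹' {v}).indicator 1) :=
    fun v => (@measurable_one ℝ≥0∞ Ω _ (MeasurableSpace.comap Y ‹_›) _).indicator
      ⟨{v}, measurableSet_singleton v, rfl⟩
  calc ∫⁻ ω, H (Y ω) ω ∂μ
      = ∫⁻ ω, ∑ v ∈ S, H v ω * (Y ⁻¹' {v}).indicator 1 ω ∂μ := by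
        refine lintegral_congr_ae (hS.mono fun ω hω => ?_)
        dsimp only
        rw [Finset.sum_eq_single_of_mem (Y ω) hω fun v _ hv => by simp [Ne.symm hv]]
        simp
    _ = ∑ v ∈ S, ∫⁻ ω, H v ω * (Y ⁻¹' {v}).indicator 1 ω ∂μ :=
        lintegral_finsetSum _ fun v _ =>
          ((hH v).mono hm le_rfl).mul ((hfiber v).mono hY.comap_le le_rfl)
    _ = ∑ v ∈ S, (∫⁻ ω, H v ω ∂μ) * μ (Y ⁻¹' {v}) := by
        refine Finset.sum_congr rfl fun v _ => ?_
        rw [lintegral_mul_eq_lintegral_mul_lintegral_of_independent_measurableSpace hm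
          hY.comap_le hind (hH v) (hfiber v),
          lintegral_indicator_one (hY (measurableSet_singleton v))]

section PastSigma

variable {Ω β : Type*} {mΩ : MeasurableSpace Ω} [MeasurableSpace β] {μ : Measure Ω}
  {ξ : ℕ → Ω → β}

/-- The paper's `F_n`: with steps indexed from `0`, it is generated by `ξ 0, …, ξ (n - 1)`. -/
abbrev pastSigma (ξ : ℕ → Ω → β) (n : ℕ) : MeasurableSpace Ω :=
  ⨆ k < n, MeasurableSpace.comap (ξ k) ‹_›

lemma measurable_pastSigma {k n : ℕ} (hk : k < n) : Measurable[pastSigma ξ n] (ξ k) :=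
  Measurable.of_comap_le <|
    le_iSup₂ (f := fun k (_ : k < n) => MeasurableSpace.comap (ξ k) ‹_›) k hk

lemma pastSigma_le (hξ : ∀ n, Measurable (ξ n)) (n : ℕ) : pastSigma ξ n ≤ mΩ :=
  iSup₂_le fun k _ => (hξ k).comap_le

theorem ProbabilityTheory.iIndepFun.indep_pastSigma (hξ : ∀ n, Measurable (ξ n))
    (hind : iIndepFun ξ μ) (n : ℕ) :
    Indep (pastSigma ξ n) (MeasurableSpace.comap (ξ n) ‹_›) μ := by
  simpa using indep_iSup_of_disjoint (fun k => (hξ k).comap_le)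
    ((iIndepFun_iff_iIndep _ _ _).1 hind) (S := Set.Iio n) (T := {n}) (by simp)

lemma measurable_pastSigma_of_succ {G : Type*} [Add G] [MeasurableSpace G] [MeasurableAdd₂ G]
    {X : ℕ → Ω → G} {g : β → G} (hg : Measurable g) {c : G}
    (h0 : ∀ ω, X 0 ω = c) (hsucc : ∀ n ω, X (n + 1) ω = X n ω + g (ξ n ω)) {k n : ℕ}
    (hk : k ≤ n) : Measurable[pastSigma ξ n] (X k) := by
  induction k with
  | zero => rw [funext h0]; exact measurable_const
  | succ k ih =>
    rw [funext (hsucc k)]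
    exact (ih (by omega)).add (hg.comp (measurable_pastSigma (by omega)))

end PastSigma

lemma Nat.lt_sInf_iff_of_nonempty {s : Set ℕ} (hs : s.Nonempty) {n : ℕ} :
    n < sInf s ↔ ∀ k ≤ n, k ∉ s := by
  refine ⟨fun h k hk hks => absurd (Nat.sInf_le hks) (by omega), fun h => ?_⟩
  by_contra hc
  exact h _ (not_lt.1 hc) (Nat.sInf_mem hs)

lemma ENNReal.natCast_eq_tsum_indicator (m : ℕ) :
    (m : ℝ≥0∞) = ∑' n, (Set.Iio m).indicator 1 n := by
  rw [← Finset.coe_range, ← sum_eq_tsum_indicator]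
  simp

theorem lintegral_sInf_eq_tsum {Ω : Type*} [MeasurableSpace Ω] {μ : Measure Ω}
    {S : Ω → Set ℕ} (hS : ∀ᵐ ω ∂μ, (S ω).Nonempty)
    (hmeas : ∀ n, MeasurableSet {ω | ∀ k ≤ n, k ∉ S ω}) :
    ∫⁻ ω, ((sInf (S ω) : ℕ) : ℝ≥0∞) ∂μ = ∑' n, μ {ω | ∀ k ≤ n, k ∉ S ω} := by
  simp_rw [← lintegral_indicator_one (hmeas _)]
  rw [← lintegral_tsum fun n => (measurable_one.indicator (hmeas n)).aemeasurable]
  refine lintegral_congr_ae (hS.mono fun ω hω => ?_)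
  dsimp only
  rw [ENNReal.natCast_eq_tsum_indicator]
  congr 1 with n
  classical
  simp [Set.indicator_apply, Nat.lt_sInf_iff_of_nonempty hω]

namespace ENNReal

variable {p e : ℕ → ℝ≥0∞}

lemma sum_range_add_eq_of_add_eq (hrec : ∀ n, e (n + 1) + p n = e n) (n : ℕ) :
    ∑ k ∈ Finset.range n, p k + e n = e 0 := by
  induction n with
  | zero => simp
  | succ n ih => rw [Finset.sum_range_succ, add_assoc, add_comm (p n), hrec, ih]

lemma tsum_eq_of_add_eq (hrec : ∀ n, e (n + 1) + p n = e n)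
    (he : Tendsto e atTop (𝓝 0)) : ∑' n, p n = e 0 := by
  have hlim := (ENNReal.tendsto_nat_tsum p).add he
  rw [add_zero] at hlim
  refine tendsto_nhds_unique hlim ?_
  simp_rw [sum_range_add_eq_of_add_eq hrec]
  exact tendsto_const_nhds

lemma tendsto_nhds_zero_of_natCast_mul_le {C : ℝ≥0∞} (he : Antitone e)
    (hp : Tendsto p atTop (𝓝 0)) (hC : C ≠ ∞)
    (hbound : ∀ K : ℕ, ∃ c ≠ ∞, ∀ n, K * e n ≤ c * p n + C) :
    Tendsto e atTop (𝓝 0) := by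
  have hlim := tendsto_atTop_iInf he
  suffices hL : ⨅ n, e n = 0 by rwa [hL] at hlim
  have hK : ∀ K : ℕ, (K : ℝ≥0∞) * ⨅ n, e n ≤ C := fun K => by
    obtain ⟨c, hc, hcK⟩ := hbound K
    have hC' : Tendsto (fun n => c * p n + C) atTop (𝓝 C) := by
      simpa using (ENNReal.Tendsto.const_mul hp (Or.inr hc)).add_const C
    exact ge_of_tendsto' hC' fun n => (mul_le_mul_right (iInf_le e n) _).trans (hcK n)
  by_contra hL
  have htop := ENNReal.Tendsto.mul_const (b := ⨅ n, e n) ENNReal.tendsto_nat_nhds_top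
    (Or.inl top_ne_zero)
  rw [top_mul hL] at htop
  exact hC (top_le_iff.1 (le_of_tendsto' htop hK))

end ENNReal

def gapSteps : Finset (ℤ × ℤ) := {(-1, 0), (1, -1), (0, 1)}

noncomputable def gapProduct (p : ℤ × ℤ) : ℝ≥0∞ := ENNReal.ofReal (p.1 * p.2)

noncomputable def gapCubic (p : ℤ × ℤ) : ℝ≥0∞ := ENNReal.ofReal (p.1 * p.2 * (p.1 + p.2))

lemma sum_gapSteps {M : Type*} [AddCommMonoid M] (f : ℤ × ℤ → M) :
    ∑ v ∈ gapSteps, f v = f (-1, 0) + f (1, -1) + f (0, 1) := by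
  simp [gapSteps, add_assoc]

lemma gapProduct_eq_zero (p : ℤ × ℤ) (hp : p.1 * p.2 = 0) : gapProduct p = 0 := by
  simp [gapProduct, ← Int.cast_mul, hp]

lemma gapCubic_eq_zero (p : ℤ × ℤ) (hp : p.1 * p.2 = 0) : gapCubic p = 0 := by
  simp [gapCubic, ← Int.cast_mul, hp]

lemma sum_gapSteps_gapProduct {x y : ℤ} (hx : 1 ≤ x) (hy : 1 ≤ y) :
    ∑ v ∈ gapSteps, gapProduct ((x, y) + v) + 1 = 3 * gapProduct (x, y) := by
  obtain ⟨m, rfl⟩ : ∃ m : ℕ, x = m + 1 := ⟨(x - 1).toNat, by omega⟩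
  obtain ⟨k, rfl⟩ : ∃ k : ℕ, y = k + 1 := ⟨(y - 1).toNat, by omega⟩
  simp only [sum_gapSteps, gapProduct, Prod.mk_add_mk]
  push_cast
  rw [← ENNReal.ofReal_one, ← ENNReal.ofReal_add, ← ENNReal.ofReal_add, ← ENNReal.ofReal_add,
    ← ENNReal.ofReal_ofNat 3, ← ENNReal.ofReal_mul]
  · congr 1; ring
  all_goals ring_nf; positivity

lemma sum_gapSteps_gapCubic {x y : ℤ} (hx : 1 ≤ x) (hy : 1 ≤ y) :
    ∑ v ∈ gapSteps, gapCubic ((x, y) + v) = 3 * gapCubic (x, y) := by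
  obtain ⟨m, rfl⟩ : ∃ m : ℕ, x = m + 1 := ⟨(x - 1).toNat, by omega⟩
  obtain ⟨k, rfl⟩ : ∃ k : ℕ, y = k + 1 := ⟨(y - 1).toNat, by omega⟩
  simp only [sum_gapSteps, gapCubic, Prod.mk_add_mk]
  push_cast
  rw [← ENNReal.ofReal_add, ← ENNReal.ofReal_add, ← ENNReal.ofReal_ofNat 3,
    ← ENNReal.ofReal_mul]
  · congr 1; ring
  all_goals ring_nf; positivity

lemma natCast_mul_gapProduct_le (K : ℕ) {x y : ℤ} (hx : 0 ≤ x) (hy : 0 ≤ y) :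
    K * gapProduct (x, y) ≤ K ^ 3 + gapCubic (x, y) := by
  have hx' : (0 : ℝ) ≤ x := by exact_mod_cast hx
  have hy' : (0 : ℝ) ≤ y := by exact_mod_cast hy
  simp only [gapProduct, gapCubic]
  rw [← ENNReal.ofReal_natCast, ← ENNReal.ofReal_mul (by positivity),
    ← ENNReal.ofReal_pow (by positivity), ← ENNReal.ofReal_add (by positivity) (by positivity)]
  refine ENNReal.ofReal_le_ofReal ?_
  have hxy : (0 : ℝ) ≤ x * y := mul_nonneg hx' hy'
  have hK : (0 : ℝ) ≤ K := K.cast_nonneg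
  -- either `K ≤ x + y`, or `4 * x * y ≤ (x + y) ^ 2 ≤ K ^ 2`
  rcases le_total (K : ℝ) (x + y) with h | h
  · nlinarith [mul_le_mul_of_nonneg_left h hxy, pow_nonneg hK 3]
  · have hxyK : (x : ℝ) * y ≤ K ^ 2 := by nlinarith [sq_nonneg (x - y : ℝ)]
    nlinarith [mul_le_mul_of_nonneg_left hxyK hK, mul_nonneg hxy (add_nonneg hx' hy')]

section GapWalk

variable {Ω : Type*} {ξ : ℕ → Ω → ℤ × ℤ} {A B : ℕ → Ω → ℤ}

def survivalSet (A B : ℕ → Ω → ℤ) (n : ℕ) : Set Ω := {ω | ∀ k ≤ n, A k ω * B k ω ≠ 0}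

lemma indicator_survivalSet_succ (hA : ∀ n ω, A (n + 1) ω = A n ω + (ξ n ω).1)
    (hB : ∀ n ω, B (n + 1) ω = B n ω + (ξ n ω).2) {φ : ℤ × ℤ → ℝ≥0∞}
    (hφ : ∀ p : ℤ × ℤ, p.1 * p.2 = 0 → φ p = 0) (n : ℕ) (ω : Ω) :
    (survivalSet A B (n + 1)).indicator (fun ω => φ (A (n + 1) ω, B (n + 1) ω)) ω =
      (survivalSet A B n).indicator (fun ω => φ ((A n ω, B n ω) + ξ n ω)) ω := by
  have hstep : (A (n + 1) ω, B (n + 1) ω) = (A n ω, B n ω) + ξ n ω :=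
    Prod.ext (hA n ω) (hB n ω)
  by_cases hsucc : ω ∈ survivalSet A B (n + 1)
  · have hn : ω ∈ survivalSet A B n := fun k hk => hsucc k (by omega)
    rw [Set.indicator_of_mem hsucc, Set.indicator_of_mem hn, hstep]
  by_cases hn : ω ∈ survivalSet A B n
  · have htie : A (n + 1) ω * B (n + 1) ω = 0 := by
      by_contra hne
      exact hsucc fun k hk => (Nat.le_succ_iff.1 hk).elim (hn k) (· ▸ hne)
    rw [Set.indicator_of_notMem hsucc, Set.indicator_of_mem hn, ← hstep, hφ _ htie]
  · rw [Set.indicator_of_notMem hsucc, Set.indicator_of_notMem hn]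

variable [MeasurableSpace Ω] {μ : Measure Ω} {a b : ℕ}

structure IsGapWalk (μ : Measure Ω) (ξ : ℕ → Ω → ℤ × ℤ) (a b : ℕ) (A B : ℕ → Ω → ℤ) :
    Prop where
  measurable : ∀ n, Measurable (ξ n)
  iIndepFun : iIndepFun ξ μ
  measure_eq : ∀ n, ∀ v ∈ gapSteps, μ (ξ n ⁻¹' {v}) = 1 / 3
  A_zero : ∀ ω, A 0 ω = a
  B_zero : ∀ ω, B 0 ω = b
  A_succ : ∀ n ω, A (n + 1) ω = A n ω + (ξ n ω).1
  B_succ : ∀ n ω, B (n + 1) ω = B n ω + (ξ n ω).2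

noncomputable def killedLaw (μ : Measure Ω) (A B : ℕ → Ω → ℤ) (n : ℕ) : Measure (ℤ × ℤ) :=
  (μ.restrict (survivalSet A B n)).map fun ω => (A n ω, B n ω)

namespace IsGapWalk

lemma measurable_A (h : IsGapWalk μ ξ a b A B) {k n : ℕ} (hk : k ≤ n) :
    Measurable[pastSigma ξ n] (A k) :=
  measurable_pastSigma_of_succ measurable_fst h.A_zero h.A_succ hk

lemma measurable_B (h : IsGapWalk μ ξ a b A B) {k n : ℕ} (hk : k ≤ n) :
    Measurable[pastSigma ξ n] (B k) :=
  measurable_pastSigma_of_succ measurable_snd h.B_zero h.B_succ hk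

lemma measurableSet_survivalSet (h : IsGapWalk μ ξ a b A B) (n : ℕ) :
    MeasurableSet[pastSigma ξ n] (survivalSet A B n) := by
  simp only [survivalSet, Set.ofPred_forall]
  exact .iInter fun k => .iInter fun hk =>
    ((h.measurable_A hk).mul (h.measurable_B hk)) (measurableSet_singleton 0).compl

lemma measurable_pair (h : IsGapWalk μ ξ a b A B) (n : ℕ) :
    Measurable fun ω => (A n ω, B n ω) :=
  ((h.measurable_A le_rfl).prodMk (h.measurable_B le_rfl)).mono (pastSigma_le h.measurable n)
    le_rfl

lemma lintegral_killedLaw (h : IsGapWalk μ ξ a b A B) (φ : ℤ × ℤ → ℝ≥0∞) (n : ℕ) :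
    ∫⁻ p, φ p ∂killedLaw μ A B n =
      ∫⁻ ω, (survivalSet A B n).indicator (fun ω => φ (A n ω, B n ω)) ω ∂μ := by
  rw [killedLaw, lintegral_map .of_discrete (h.measurable_pair n),
    lintegral_indicator (pastSigma_le h.measurable n _ (h.measurableSet_survivalSet n))]

lemma killedLaw_univ (h : IsGapWalk μ ξ a b A B) (n : ℕ) :
    killedLaw μ A B n Set.univ = μ (survivalSet A B n) := by
  rw [killedLaw, Measure.map_apply (h.measurable_pair n) .univ, Set.preimage_univ,
    Measure.restrict_apply_univ]

variable [IsProbabilityMeasure μ]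

lemma ae_mem_gapSteps (h : IsGapWalk μ ξ a b A B) (n : ℕ) : ∀ᵐ ω ∂μ, ξ n ω ∈ gapSteps := by
  have hfull : μ (ξ n ⁻¹' gapSteps) = 1 := by
    rw [← sum_measure_preimage_singleton _ fun v _ => h.measurable n (measurableSet_singleton v),
      Finset.sum_congr rfl fun v hv => h.measure_eq n v hv]
    simp [gapSteps]
    exact ENNReal.mul_inv_cancel three_ne_zero ENNReal.ofNat_ne_top
  exact (prob_compl_eq_zero_iff (h.measurable n (Finset.measurableSet _))).2 hfull

lemma ae_one_le_of_mem_survivalSet (h : IsGapWalk μ ξ a b A B) (ha : 0 < a) (hb : 0 < b) :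
    ∀ᵐ ω ∂μ, ∀ n, ω ∈ survivalSet A B n → 1 ≤ A n ω ∧ 1 ≤ B n ω := by
  filter_upwards [ae_all_iff.2 h.ae_mem_gapSteps] with ω hsteps n
  induction n with
  | zero => intro _; rw [h.A_zero, h.B_zero]; omega
  | succ n ih =>
    intro hsurv
    obtain ⟨hA, hB⟩ := ih fun k hk => hsurv k (by omega)
    have htie := mul_ne_zero_iff.1 (hsurv (n + 1) le_rfl)
    rw [h.A_succ, h.B_succ] at htie ⊢
    have hv := hsteps n
    simp only [gapSteps, Finset.mem_insert, Finset.mem_singleton] at hv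
    rcases hv with hv | hv | hv <;> rw [hv] at htie ⊢ <;> simp only at htie ⊢ <;> omega

lemma ae_killedLaw (h : IsGapWalk μ ξ a b A B) (ha : 0 < a) (hb : 0 < b) (n : ℕ) :
    ∀ᵐ p ∂killedLaw μ A B n, 1 ≤ p.1 ∧ 1 ≤ p.2 := by
  rw [killedLaw, ae_map_iff (h.measurable_pair n).aemeasurable (.of_discrete),
    ae_restrict_iff' (pastSigma_le h.measurable n _ (h.measurableSet_survivalSet n))]
  exact (h.ae_one_le_of_mem_survivalSet ha hb).mono fun ω hω => hω n

lemma killedLaw_zero (h : IsGapWalk μ ξ a b A B) (ha : 0 < a) (hb : 0 < b) :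
    killedLaw μ A B 0 = Measure.dirac ((a : ℤ), (b : ℤ)) := by
  have hsurv : survivalSet A B 0 = Set.univ :=
    Set.eq_univ_of_forall fun ω k hk => by
      rw [Nat.le_zero.1 hk, h.A_zero, h.B_zero]; positivity
  have hpair : (fun ω => (A 0 ω, B 0 ω)) = fun _ => ((a : ℤ), (b : ℤ)) :=
    funext fun ω => by rw [h.A_zero, h.B_zero]
  rw [killedLaw, hsurv, Measure.restrict_univ, hpair, Measure.map_const, measure_univ, one_smul]

lemma lintegral_killedLaw_succ (h : IsGapWalk μ ξ a b A B) {φ : ℤ × ℤ → ℝ≥0∞}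
    (hφ : ∀ p : ℤ × ℤ, p.1 * p.2 = 0 → φ p = 0) (n : ℕ) :
    3 * ∫⁻ p, φ p ∂killedLaw μ A B (n + 1) =
      ∑ v ∈ gapSteps, ∫⁻ p, φ (p + v) ∂killedLaw μ A B n := by
  set H : ℤ × ℤ → Ω → ℝ≥0∞ := fun v =>
    (survivalSet A B n).indicator fun ω => φ ((A n ω, B n ω) + v)
  have hH : ∀ v, Measurable[pastSigma ξ n] (H v) := fun v =>
    ((Measurable.of_discrete (f := fun p : ℤ × ℤ => φ (p + v))).comp
      ((h.measurable_A le_rfl).prodMk (h.measurable_B le_rfl))).indicator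
      (h.measurableSet_survivalSet n)
  have hsplit : ∫⁻ p, φ p ∂killedLaw μ A B (n + 1) = ∫⁻ ω, H (ξ n ω) ω ∂μ := by
    rw [h.lintegral_killedLaw]
    exact lintegral_congr (indicator_survivalSet_succ h.A_succ h.B_succ hφ n)
  rw [hsplit, lintegral_comp_eq_sum_of_indep (pastSigma_le h.measurable n) (h.measurable n)
    (h.iIndepFun.indep_pastSigma h.measurable n) (h.ae_mem_gapSteps n) hH, Finset.mul_sum]
  refine Finset.sum_congr rfl fun v hv => ?_
  rw [h.lintegral_killedLaw, h.measure_eq n v hv, mul_comm, mul_assoc,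
    ENNReal.div_mul_cancel three_ne_zero ENNReal.ofNat_ne_top, mul_one]

lemma lintegral_killedLaw_succ_add (h : IsGapWalk μ ξ a b A B) (ha : 0 < a) (hb : 0 < b)
    {φ : ℤ × ℤ → ℝ≥0∞} (hφ : ∀ p : ℤ × ℤ, p.1 * p.2 = 0 → φ p = 0) {c : ℝ≥0∞}
    (hφc : ∀ x y : ℤ, 1 ≤ x → 1 ≤ y → ∑ v ∈ gapSteps, φ ((x, y) + v) + c = 3 * φ (x, y))
    (n : ℕ) :
    3 * ∫⁻ p, φ p ∂killedLaw μ A B (n + 1) + c * μ (survivalSet A B n) =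
      3 * ∫⁻ p, φ p ∂killedLaw μ A B n := by
  rw [h.lintegral_killedLaw_succ hφ, ← h.killedLaw_univ,
    ← lintegral_finsetSum _ fun v _ => .of_discrete, ← lintegral_const,
    ← lintegral_add_right _ measurable_const, ← lintegral_const_mul _ .of_discrete]
  exact lintegral_congr_ae ((h.ae_killedLaw ha hb n).mono fun p hp => hφc p.1 p.2 hp.1 hp.2)

lemma lintegral_gapCubic_killedLaw (h : IsGapWalk μ ξ a b A B) (ha : 0 < a) (hb : 0 < b)
    (n : ℕ) : ∫⁻ p, gapCubic p ∂killedLaw μ A B n = gapCubic (a, b) := by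
  induction n with
  | zero => rw [h.killedLaw_zero ha hb, lintegral_dirac]
  | succ n ih =>
    have hrec := h.lintegral_killedLaw_succ_add ha hb gapCubic_eq_zero (c := 0)
      (fun x y hx hy => by rw [add_zero, sum_gapSteps_gapCubic hx hy]) n
    rw [zero_mul, add_zero, ih] at hrec
    exact (ENNReal.mul_right_inj three_ne_zero ENNReal.ofNat_ne_top).1 hrec

lemma natCast_mul_lintegral_gapProduct_le (h : IsGapWalk μ ξ a b A B) (ha : 0 < a)
    (hb : 0 < b) (K n : ℕ) :
    K * ∫⁻ p, gapProduct p ∂killedLaw μ A B n ≤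
      K ^ 3 * μ (survivalSet A B n) + gapCubic (a, b) := by
  rw [← h.lintegral_gapCubic_killedLaw ha hb n, ← h.killedLaw_univ, ← lintegral_const,
    ← lintegral_const_mul _ .of_discrete, ← lintegral_add_left measurable_const]
  refine lintegral_mono_ae ((h.ae_killedLaw ha hb n).mono fun p hp => ?_)
  exact natCast_mul_gapProduct_le K (by linarith [hp.1]) (by linarith [hp.2])

theorem tsum_measure_survivalSet (h : IsGapWalk μ ξ a b A B) (ha : 0 < a) (hb : 0 < b) :
    ∑' n, μ (survivalSet A B n) = 3 * a * b := by
  set e : ℕ → ℝ≥0∞ := fun n => ∫⁻ p, gapProduct p ∂killedLaw μ A B n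
  have hrec : ∀ n, 3 * e (n + 1) + μ (survivalSet A B n) = 3 * e n := fun n => by
    simpa using h.lintegral_killedLaw_succ_add ha hb gapProduct_eq_zero
      (fun x y hx hy => sum_gapSteps_gapProduct hx hy) n
  have he0 : e 0 = a * b := by
    simp [e, h.killedLaw_zero ha hb, lintegral_dirac, gapProduct]
  have hfin : ∑' n, μ (survivalSet A B n) ≠ ∞ := by
    refine ne_top_of_le_ne_top (b := 3 * e 0) ?_ (ENNReal.tsum_le_of_sum_range_le fun n => ?_)
    · rw [he0]; finiteness
    · rw [← ENNReal.sum_range_add_eq_of_add_eq (e := fun n => 3 * e n) hrec n]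
      exact le_self_add
  have he : Tendsto e atTop (𝓝 0) := by
    refine ENNReal.tendsto_nhds_zero_of_natCast_mul_le (antitone_nat_of_succ_le fun n => ?_)
      (ENNReal.tendsto_atTop_zero_of_tsum_ne_top hfin) ENNReal.ofReal_ne_top fun K =>
        ⟨K ^ 3, by simp, h.natCast_mul_lintegral_gapProduct_le ha hb K⟩
    exact (ENNReal.mul_le_mul_iff_right three_ne_zero ENNReal.ofNat_ne_top).1
      (hrec n ▸ le_self_add)
  rw [ENNReal.tsum_eq_of_add_eq (e := fun n => 3 * e n) hrec
    (by simpa using ENNReal.Tendsto.const_mul he (Or.inr ENNReal.ofNat_ne_top)), he0, mul_assoc]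

lemma ae_exists_tie (h : IsGapWalk μ ξ a b A B) (ha : 0 < a) (hb : 0 < b) :
    ∀ᵐ ω ∂μ, ∃ n, A n ω * B n ω = 0 := by
  have hfin : ∑' n, μ (survivalSet A B n) ≠ ∞ := by
    rw [h.tsum_measure_survivalSet ha hb]; finiteness
  filter_upwards [ae_eventually_notMem hfin] with ω hω
  obtain ⟨n, hn⟩ := hω.exists
  simp only [survivalSet, Set.mem_ofPred_eq, not_forall, not_not] at hn
  obtain ⟨k, -, hk⟩ := hn
  exact ⟨k, hk⟩

end IsGapWalk

end GapWalk

/-- For the three-team competition process started from positive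
integer gaps `a` and `b`, the expected value of the first tie time `T` equals `3ab`. -/
theorem stmt_0
    {Ω : Type*} [MeasurableSpace Ω] (μ : Measure Ω) [IsProbabilityMeasure μ]
    (a b : ℕ) (ha : 0 < a) (hb : 0 < b)
    (ξ : ℕ → Ω → ℤ × ℤ)
    (hmeas : ∀ n, Measurable (ξ n))
    (hindep : iIndepFun ξ μ)
    (hunif : ∀ n, ∀ v ∈ ({(-1, 0), (1, -1), (0, 1)} : Set (ℤ × ℤ)),
      μ {ω | ξ n ω = v} = 1 / 3)
    (A B : ℕ → Ω → ℤ)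
    (hA0 : ∀ ω, A 0 ω = (a : ℤ)) (hB0 : ∀ ω, B 0 ω = (b : ℤ))
    (hA : ∀ n ω, A (n + 1) ω = A n ω + (ξ n ω).1)
    (hB : ∀ n ω, B (n + 1) ω = B n ω + (ξ n ω).2)
    (T : Ω → ℕ)
    (hT : ∀ ω, T ω = sInf {n | A n ω * B n ω = 0}) :
    ∫⁻ ω, (T ω : ℝ≥0∞) ∂μ = ((3 * a * b : ℕ) : ℝ≥0∞) := by
  have h : IsGapWalk μ ξ a b A B :=
    ⟨hmeas, hindep, fun n v hv => hunif n v (by simpa [gapSteps] using hv), hA0, hB0, hA, hB⟩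
  calc ∫⁻ ω, (T ω : ℝ≥0∞) ∂μ = ∑' n, μ (survivalSet A B n) := by
        simp_rw [hT]
        exact lintegral_sInf_eq_tsum (S := fun ω => {n | A n ω * B n ω = 0})
          (h.ae_exists_tie ha hb) fun n => pastSigma_le hmeas n _ (h.measurableSet_survivalSet n)
    _ = ((3 * a * b : ℕ) : ℝ≥0∞) := by
        rw [h.tsum_measure_survivalSet ha hb]
        push_cast
        rfl
end

section
/- The process G(n) = A(n)·B(n) + n/3 is a martingale with respect to the filtration (F_n), i.e. E[G(n+1) | F_n] = G(n) for every n ≥ 0. -/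
open MeasureTheory ProbabilityTheory Filter
open scoped ENNReal

/-!
Write `(X, Y) = ξ n`, so that `G (n + 1) = (A n + X) * (B n + Y) + (n + 1) / 3`. The step `ξ n` is
independent of `ℱ n`, while `A n` and `B n` are `ℱ n`-measurable, hence conditioning on `ℱ n` gives
`A n * B n + A n * E[Y] + B n * E[X] + E[X * Y] + (n + 1) / 3`. A uniform step has
`E[X] = E[Y] = 0` and `E[X * Y] = -1/3`, which leaves `G n`. Since a step takes only three values,
`A n`, `B n`, `X`, `Y` are essentially bounded and every product above is integrable.
-/

section FiniteRange

variable {Ω α : Type*} [MeasurableSpace Ω] {μ : Measure Ω} [MeasurableSpace α]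
  [DiscreteMeasurableSpace α] {g : Ω → α} {s : Finset α}

lemma ae_mem_finset_of_sum_measure_eq_one [IsProbabilityMeasure μ] (hg : Measurable g)
    (hs : ∑ v ∈ s, μ (g ⁻¹' {v}) = 1) : ∀ᵐ ω ∂μ, g ω ∈ s := by
  have hpre : μ (g ⁻¹' s) = μ Set.univ := by
    rw [← Measure.map_apply hg s.measurableSet, ← sum_measure_singleton, measure_univ]
    simpa [Measure.map_apply hg (measurableSet_singleton _)] using hs
  exact (ae_mem_iff_measure_eq (hg s.measurableSet).nullMeasurableSet).2 hpre

lemma memLp_top_comp_of_ae_mem_finset (hg : Measurable g) (hs : ∀ᵐ ω ∂μ, g ω ∈ s)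
    (f : α → ℝ) : MemLp (fun ω => f (g ω)) ∞ μ := by
  refine memLp_top_of_bound (Measurable.of_discrete.comp hg).aestronglyMeasurable
    (∑ v ∈ s, ‖f v‖) ?_
  filter_upwards [hs] with ω hω
  exact Finset.single_le_sum (f := fun v => ‖f v‖) (fun _ _ => norm_nonneg _) hω

lemma integral_comp_eq_sum_of_ae_mem_finset [IsFiniteMeasure μ] (hg : Measurable g)
    (hs : ∀ᵐ ω ∂μ, g ω ∈ s) (f : α → ℝ) :
    ∫ ω, f (g ω) ∂μ = ∑ v ∈ s, μ.real (g ⁻¹' {v}) * f v := by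
  have hmap : (μ.map g).restrict s = μ.map g :=
    Measure.restrict_eq_self_of_ae_mem ((ae_map_iff hg.aemeasurable s.measurableSet).2 hs)
  rw [← integral_map hg.aemeasurable Measurable.of_discrete.aestronglyMeasurable, ← hmap,
    setIntegral_finset s IntegrableOn.finset]
  simp [map_measureReal_apply hg (measurableSet_singleton _)]

end FiniteRange

structure IsUniformStep {Ω : Type*} [MeasurableSpace Ω] (μ : Measure Ω) (ζ : Ω → ℤ × ℤ) :
    Prop where
  measurable : Measurable ζ
  measure_eq : ∀ v ∈ ({(-1, 0), (1, -1), (0, 1)} : Set (ℤ × ℤ)), μ {ω | ζ ω = v} = 1 / 3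

namespace IsUniformStep

variable {Ω : Type*} [MeasurableSpace Ω] {μ : Measure Ω} [IsProbabilityMeasure μ]
  {ζ : Ω → ℤ × ℤ}

lemma ae_mem (hζ : IsUniformStep μ ζ) :
    ∀ᵐ ω ∂μ, ζ ω ∈ ({(-1, 0), (1, -1), (0, 1)} : Finset (ℤ × ℤ)) := by
  refine ae_mem_finset_of_sum_measure_eq_one hζ.measurable ?_
  have hv : ∀ v ∈ ({(-1, 0), (1, -1), (0, 1)} : Set (ℤ × ℤ)), μ (ζ ⁻¹' {v}) = 3⁻¹ :=
    fun v hv => (hζ.measure_eq v hv).trans (one_div 3)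
  rw [Finset.sum_insert (by decide), Finset.sum_insert (by decide), Finset.sum_singleton,
    hv _ (by simp), hv _ (by simp), hv _ (by simp)]
  calc (3 : ℝ≥0∞)⁻¹ + (3⁻¹ + 3⁻¹) = 3 * 3⁻¹ := by ring
    _ = 1 := ENNReal.mul_inv_cancel (by norm_num) (by norm_num)

lemma memLp_comp (hζ : IsUniformStep μ ζ) (f : ℤ × ℤ → ℝ) : MemLp (fun ω => f (ζ ω)) ∞ μ :=
  memLp_top_comp_of_ae_mem_finset hζ.measurable hζ.ae_mem f

lemma integral_comp (hζ : IsUniformStep μ ζ) (f : ℤ × ℤ → ℝ) :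
    ∫ ω, f (ζ ω) ∂μ = (f (-1, 0) + f (1, -1) + f (0, 1)) / 3 := by
  have hv : ∀ v ∈ ({(-1, 0), (1, -1), (0, 1)} : Set (ℤ × ℤ)), μ.real (ζ ⁻¹' {v}) = 3⁻¹ := by
    intro v hv
    simp [measureReal_def, Set.preimage, hζ.measure_eq v hv]
  rw [integral_comp_eq_sum_of_ae_mem_finset hζ.measurable hζ.ae_mem,
    Finset.sum_insert (by decide), Finset.sum_insert (by decide), Finset.sum_singleton,
    hv _ (by simp), hv _ (by simp), hv _ (by simp)]
  ring

lemma integral_fst (hζ : IsUniformStep μ ζ) : ∫ ω, ((ζ ω).1 : ℝ) ∂μ = 0 := by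
  simp [hζ.integral_comp fun v => (v.1 : ℝ)]

lemma integral_snd (hζ : IsUniformStep μ ζ) : ∫ ω, ((ζ ω).2 : ℝ) ∂μ = 0 := by
  simp [hζ.integral_comp fun v => (v.2 : ℝ)]

lemma integral_fst_mul_snd (hζ : IsUniformStep μ ζ) :
    ∫ ω, ((ζ ω).1 : ℝ) * (ζ ω).2 ∂μ = -1 / 3 := by
  simp [hζ.integral_comp fun v => (v.1 : ℝ) * v.2]

end IsUniformStep

lemma memLp_top_of_succ_eq_add {Ω : Type*} [MeasurableSpace Ω] {μ : Measure Ω}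
    [IsProbabilityMeasure μ] {ξ : ℕ → Ω → ℤ × ℤ} (hξ : ∀ n, IsUniformStep μ (ξ n))
    {S : ℕ → Ω → ℤ} {f : ℤ × ℤ → ℤ} {c : ℤ} (h0 : ∀ ω, S 0 ω = c)
    (hS : ∀ n ω, S (n + 1) ω = S n ω + f (ξ n ω)) (n : ℕ) :
    MemLp (fun ω => (S n ω : ℝ)) ∞ μ := by
  induction n with
  | zero => simpa [h0] using memLp_const (μ := μ) (p := ∞) (c : ℝ)
  | succ n ih =>
    simp_rw [hS, Int.cast_add]
    exact ih.add ((hξ n).memLp_comp fun v => (f v : ℝ))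

section Independence

variable {Ω : Type*} {m m' m0 : MeasurableSpace Ω} {μ : Measure Ω} [IsFiniteMeasure μ]

lemma condExp_mul_of_indep (hm : m ≤ m0) (hm' : m' ≤ m0) (hind : Indep m' m μ) {f g : Ω → ℝ}
    (hf : StronglyMeasurable[m] f) (hg : StronglyMeasurable[m'] g) (hfg : Integrable (f * g) μ)
    (hgi : Integrable g μ) : μ[f * g | m] =ᵐ[μ] fun ω => f ω * ∫ ω', g ω' ∂μ := by
  filter_upwards [condExp_mul_of_stronglyMeasurable_left hf hfg hgi,
    condExp_indep_eq hm' hm hg hind] with ω h hg'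
  rw [h, Pi.mul_apply, hg']

lemma condExp_add_mul_add_of_indep (hm : m ≤ m0) (hm' : m' ≤ m0) (hind : Indep m' m μ)
    {A B X Y : Ω → ℝ} (hA : Measurable[m] A) (hB : Measurable[m] B) (hX : Measurable[m'] X)
    (hY : Measurable[m'] Y) (hAL : MemLp A ∞ μ) (hBL : MemLp B ∞ μ) (hXL : MemLp X ∞ μ)
    (hYL : MemLp Y ∞ μ) (hX0 : ∫ ω, X ω ∂μ = 0) (hY0 : ∫ ω, Y ω ∂μ = 0) :
    μ[fun ω => (A ω + X ω) * (B ω + Y ω) | m] =ᵐ[μ]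
      fun ω => A ω * B ω + ∫ ω', X ω' * Y ω' ∂μ := by
  have hint {f g : Ω → ℝ} (hf : MemLp f ∞ μ) (hg : MemLp g ∞ μ) : Integrable (f * g) μ :=
    (hg.mul hf).integrable le_top
  have hexpand : (fun ω => (A ω + X ω) * (B ω + Y ω)) = A * B + (A * Y + (B * X + X * Y)) := by
    ext ω
    simp only [Pi.add_apply, Pi.mul_apply]
    ring
  have hAB : μ[A * B | m] = A * B :=
    condExp_of_stronglyMeasurable hm (hA.mul hB).stronglyMeasurable (hint hAL hBL)
  have hAY := condExp_mul_of_indep hm hm' hind hA.stronglyMeasurable hY.stronglyMeasurable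
    (hint hAL hYL) (hYL.integrable le_top)
  have hBX := condExp_mul_of_indep hm hm' hind hB.stronglyMeasurable hX.stronglyMeasurable
    (hint hBL hXL) (hXL.integrable le_top)
  have hXY := condExp_indep_eq hm' hm (hX.mul hY).stronglyMeasurable hind
  rw [hexpand]
  filter_upwards [condExp_add (hint hAL hBL)
      ((hint hAL hYL).add ((hint hBL hXL).add (hint hXL hYL))) m,
    condExp_add (hint hAL hYL) ((hint hBL hXL).add (hint hXL hYL)) m,
    condExp_add (hint hBL hXL) (hint hXL hYL) m, hAY, hBX, hXY] with ω h₁ h₂ h₃ h₄ h₅ h₆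
  rw [h₁, Pi.add_apply, h₂, Pi.add_apply, h₃, Pi.add_apply, h₄, h₅, h₆, hAB, hX0, hY0]
  simp only [Pi.mul_apply, mul_zero, zero_add]

end Independence

section StrictNatural

variable {Ω β : Type*} {mΩ : MeasurableSpace Ω} [mβ : MeasurableSpace β] {ξ : ℕ → Ω → β}

/-- The σ-algebra generated by `ξ 0, …, ξ (n - 1)`: one step behind `Filtration.natural`. -/
abbrev strictNatural (ξ : ℕ → Ω → β) (n : ℕ) : MeasurableSpace Ω :=
  ⨆ k ∈ Finset.range n, mβ.comap (ξ k)

lemma strictNatural_le (hξ : ∀ n, Measurable (ξ n)) (n : ℕ) : strictNatural ξ n ≤ mΩ :=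
  iSup₂_le fun k _ => (hξ k).comap_le

lemma comap_le_strictNatural {k n : ℕ} (h : k < n) : mβ.comap (ξ k) ≤ strictNatural ξ n :=
  le_iSup₂ (f := fun k _ => mβ.comap (ξ k)) k (Finset.mem_range.2 h)

lemma strictNatural_mono : Monotone (strictNatural ξ) := fun _ _ h =>
  iSup₂_le fun _ hk => comap_le_strictNatural ((Finset.mem_range.1 hk).trans_le h)

lemma ProbabilityTheory.iIndepFun.indep_comap_strictNatural {μ : Measure Ω}
    (hξ : ∀ n, Measurable (ξ n)) (hind : iIndepFun ξ μ) (n : ℕ) : Indep (mβ.comap (ξ n)) (strictNatural ξ n) μ := by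
  have h := indep_iSup_of_disjoint (fun k => (hξ k).comap_le) hind
    (S := {n}) (T := {k | k < n}) (by simp)
  simpa [strictNatural] using h

lemma measurable_strictNatural_of_succ_eq_add {γ : Type*} [Add γ] [MeasurableSpace γ]
    [MeasurableAdd₂ γ] {S : ℕ → Ω → γ} {f : β → γ} (hf : Measurable f) {c : γ}
    (h0 : ∀ ω, S 0 ω = c) (hS : ∀ n ω, S (n + 1) ω = S n ω + f (ξ n ω)) (n : ℕ) :
    Measurable[strictNatural ξ n] (S n) := by
  induction n with
  | zero => simp [funext h0]
  | succ n ih =>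
    rw [show S (n + 1) = fun ω => S n ω + f (ξ n ω) from funext (hS n)]
    exact (ih.mono (strictNatural_mono n.le_succ) le_rfl).add
      ((hf.comp (comap_measurable (ξ n))).mono (comap_le_strictNatural n.lt_succ_self) le_rfl)

end StrictNatural

theorem stmt_5_general
{Ω : Type*} [MeasurableSpace Ω] (μ : Measure Ω) [IsProbabilityMeasure μ]
    (a b : ℕ)
    (ξ : ℕ → Ω → ℤ × ℤ)
    (hmeas : ∀ n, Measurable (ξ n))
    (hindep : iIndepFun ξ μ)
    (hunif : ∀ n, ∀ v ∈ ({(-1, 0), (1, -1), (0, 1)} : Set (ℤ × ℤ)),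
      μ {ω | ξ n ω = v} = 1 / 3)
    (A B : ℕ → Ω → ℤ)
    (hA0 : ∀ ω, A 0 ω = (a : ℤ)) (hB0 : ∀ ω, B 0 ω = (b : ℤ))
    (hA : ∀ n ω, A (n + 1) ω = A n ω + (ξ n ω).1)
    (hB : ∀ n ω, B (n + 1) ω = B n ω + (ξ n ω).2)
(ℱ : ℕ → MeasurableSpace Ω)
    (hℱ : ∀ n, ℱ n = ⨆ k ∈ Finset.range n, MeasurableSpace.comap (ξ k) inferInstance)
    (G : ℕ → Ω → ℝ)
    (hG : ∀ n ω, G n ω = ((A n ω * B n ω : ℤ) : ℝ) + (n : ℝ) / 3) :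
    ∀ n : ℕ, μ[G (n + 1)|ℱ n] =ᵐ[μ] G n := by
  obtain rfl : ℱ = strictNatural ξ := funext hℱ
  intro n
  have hstep (k : ℕ) : IsUniformStep μ (ξ k) := ⟨hmeas k, hunif k⟩
  have hAL := memLp_top_of_succ_eq_add hstep hA0 hA n
  have hBL := memLp_top_of_succ_eq_add hstep hB0 hB n
  have hXL := (hstep n).memLp_comp fun v => (v.1 : ℝ)
  have hYL := (hstep n).memLp_comp fun v => (v.2 : ℝ)
  have hcond : μ[fun ω => ((A n ω : ℝ) + (ξ n ω).1) * ((B n ω : ℝ) + (ξ n ω).2) | strictNatural ξ n]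
      =ᵐ[μ] fun ω => (A n ω : ℝ) * B n ω + -1 / 3 := by
    rw [← (hstep n).integral_fst_mul_snd]
    exact condExp_add_mul_add_of_indep (strictNatural_le hmeas n) (hmeas n).comap_le
      (hindep.indep_comap_strictNatural hmeas n)
      (Measurable.of_discrete.comp (measurable_strictNatural_of_succ_eq_add .of_discrete hA0 hA n))
      (Measurable.of_discrete.comp (measurable_strictNatural_of_succ_eq_add .of_discrete hB0 hB n))
      ((Measurable.of_discrete (f := fun v : ℤ × ℤ => (v.1 : ℝ))).comp (comap_measurable (ξ n)))
      ((Measurable.of_discrete (f := fun v : ℤ × ℤ => (v.2 : ℝ))).comp (comap_measurable (ξ n)))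
      hAL hBL hXL hYL (hstep n).integral_fst (hstep n).integral_snd
  have hGsucc : G (n + 1) = (fun ω => ((A n ω : ℝ) + (ξ n ω).1) * ((B n ω : ℝ) + (ξ n ω).2))
      + fun _ => ((n : ℝ) + 1) / 3 := by
    ext ω
    simp [hG, hA, hB]
  rw [hGsucc]
  have hint : Integrable (fun ω => ((A n ω : ℝ) + (ξ n ω).1) * ((B n ω : ℝ) + (ξ n ω).2)) μ :=
    ((hBL.add hYL).mul (hAL.add hXL)).integrable le_top
  filter_upwards [condExp_add hint (integrable_const _) _, hcond] with ω h₁ h₂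
  rw [h₁, Pi.add_apply, h₂, condExp_const (strictNatural_le hmeas n), hG]
  push_cast
  ring

/-- The process `G n = A n * B n + n / 3` is a martingale with respect
to the filtration generated by the steps: `E[G (n+1) | ℱ n] = G n` a.s. for every `n`. -/
theorem stmt_5
{Ω : Type*} [MeasurableSpace Ω] (μ : Measure Ω) [IsProbabilityMeasure μ]
    (a b : ℕ) (ha : 0 < a) (hb : 0 < b)
    (ξ : ℕ → Ω → ℤ × ℤ)
    (hmeas : ∀ n, Measurable (ξ n))
    (hindep : iIndepFun ξ μ)
    (hunif : ∀ n, ∀ v ∈ ({(-1, 0), (1, -1), (0, 1)} : Set (ℤ × ℤ)),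
      μ {ω | ξ n ω = v} = 1 / 3)
    (A B : ℕ → Ω → ℤ)
    (hA0 : ∀ ω, A 0 ω = (a : ℤ)) (hB0 : ∀ ω, B 0 ω = (b : ℤ))
    (hA : ∀ n ω, A (n + 1) ω = A n ω + (ξ n ω).1)
    (hB : ∀ n ω, B (n + 1) ω = B n ω + (ξ n ω).2)
(ℱ : ℕ → MeasurableSpace Ω)
    (hℱ : ∀ n, ℱ n = ⨆ k ∈ Finset.range n, MeasurableSpace.comap (ξ k) inferInstance)
    (G : ℕ → Ω → ℝ)
    (hG : ∀ n ω, G n ω = ((A n ω * B n ω : ℤ) : ℝ) + (n : ℝ) / 3) :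
    ∀ n : ℕ, μ[G (n + 1)|ℱ n] =ᵐ[μ] G n :=
  stmt_5_general μ a b ξ hmeas hindep hunif A B hA0 hB0 hA hB ℱ hℱ G hG
end

section
/- The process G_{2,1}(n) = A(n)²·B(n) + A(n)·B(n)² is a martingale with respect to the filtration (F_n), i.e. E[G_{2,1}(n+1) | F_n] = G_{2,1}(n) for every n ≥ 0. -/
open MeasureTheory ProbabilityTheory Filter
open scoped ENNReal Pointwise

/-! With `Z = (A, B)`, `G (n + 1) = G₂₁ (Z n + ξ n)` where `Z n` is `ℱ n`-measurable and `ξ n` is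
independent of `ℱ n`, so conditioning on `ℱ n` averages `G₂₁ (Z n + v)` over the three steps `v`.
The polynomial `G₂₁ x y = x²y + xy²` is harmonic for this walk:
`∑ᵥ G₂₁ (z + v) = 3 G₂₁ z`. Integrability costs nothing, since a walk started at a point with
finitely many possible steps takes only finitely many values at each time. -/

section CondExp

variable {Ω : Type*} {m m₀ : MeasurableSpace Ω} {μ : Measure Ω} [IsFiniteMeasure μ]

theorem condExp_mul_ae_eq_of_indep {m' : MeasurableSpace Ω} (hm : m ≤ m₀) (hm' : m' ≤ m₀)
    (hind : Indep m' m μ) {f g : Ω → ℝ} (hf : StronglyMeasurable[m] f)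
    (hg : StronglyMeasurable[m'] g) (hfg : Integrable (f * g) μ) (hgi : Integrable g μ) :
    μ[f * g | m] =ᵐ[μ] fun ω => f ω * μ[g] := by
  filter_upwards [condExp_mul_of_stronglyMeasurable_left hf hfg hgi,
    condExp_indep_eq hm' hm hg hind] with ω hfg hg
  rw [hfg, Pi.mul_apply, hg]

theorem condExp_comp_ae_eq_sum_of_indep {β : Type*} [MeasurableSpace β]
    [MeasurableSingletonClass β] (hm : m ≤ m₀) {Y : Ω → β} (hY : Measurable Y)
    (hind : Indep (MeasurableSpace.comap Y inferInstance) m μ) {S : Finset β}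
    (hS : ∀ᵐ ω ∂μ, Y ω ∈ S) {f : β → Ω → ℝ} (hf : ∀ v ∈ S, StronglyMeasurable[m] (f v))
    (hfi : ∀ v ∈ S, Integrable (f v) μ) :
    μ[fun ω => f (Y ω) ω | m] =ᵐ[μ] fun ω => ∑ v ∈ S, f v ω * μ.real (Y ⁻¹' {v}) := by
  have hfiber : ∀ v, MeasurableSet (Y ⁻¹' {v}) := fun v => hY (measurableSet_singleton v)
  have hsplit : (fun ω => f (Y ω) ω) =ᵐ[μ] ∑ v ∈ S, f v * (Y ⁻¹' {v}).indicator 1 := by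
    filter_upwards [hS] with ω hω
    rw [Finset.sum_apply, Finset.sum_eq_single_of_mem _ hω fun v _ hv => by simp [Ne.symm hv]]
    simp
  have hterm : ∀ v ∈ S, Integrable (f v * (Y ⁻¹' {v}).indicator 1) μ := fun v hv => by
    rw [show f v * (Y ⁻¹' {v}).indicator 1 = (Y ⁻¹' {v}).indicator (f v) from
      funext fun ω => by by_cases h : Y ω = v <;> simp [h]]
    exact (hfi v hv).indicator (hfiber v)
  have hcond : ∀ v ∈ S, μ[f v * (Y ⁻¹' {v}).indicator 1 | m] =ᵐ[μ]
      fun ω => f v ω * μ.real (Y ⁻¹' {v}) := fun v hv => by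
    rw [← integral_indicator_one (hfiber v)]
    exact condExp_mul_ae_eq_of_indep hm hY.comap_le hind (hf v hv)
      (stronglyMeasurable_one.indicator ⟨{v}, measurableSet_singleton v, rfl⟩)
      (hterm v hv) ((integrable_const (1 : ℝ)).indicator (hfiber v))
  refine (condExp_congr_ae hsplit).trans ((condExp_finsetSum hterm _).trans ?_)
  filter_upwards [(eventually_all_finset S).2 hcond] with ω hω
  rw [Finset.sum_apply]
  exact Finset.sum_congr rfl hω

end CondExp

theorem integrable_comp_of_ae_mem_finite {Ω β : Type*} {m₀ : MeasurableSpace Ω}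
    {μ : Measure Ω} [IsFiniteMeasure μ] [MeasurableSpace β] [DiscreteMeasurableSpace β]
    {X : Ω → β} (hX : Measurable X) {T : Set β} (hT : T.Finite) (hXT : ∀ᵐ ω ∂μ, X ω ∈ T)
    (g : β → ℝ) : Integrable (fun ω => g (X ω)) μ := by
  obtain ⟨C, hC⟩ := (hT.image fun x => ‖g x‖).bddAbove
  refine Integrable.of_bound (Measurable.of_discrete.comp hX).aestronglyMeasurable C ?_
  filter_upwards [hXT] with ω hω using hC ⟨_, hω, rfl⟩

theorem ae_mem_of_sum_measure_preimage_eq_one {Ω β : Type*} {m₀ : MeasurableSpace Ω}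
    {μ : Measure Ω} [IsProbabilityMeasure μ] [MeasurableSpace β] [MeasurableSingletonClass β]
    {Y : Ω → β} (hY : Measurable Y) {S : Finset β} (h : ∑ v ∈ S, μ (Y ⁻¹' {v}) = 1) :
    ∀ᵐ ω ∂μ, Y ω ∈ S := by
  rw [sum_measure_preimage_singleton S fun v _ => hY (measurableSet_singleton v)] at h
  exact (ae_mem_iff_measure_eq (hY S.measurableSet).nullMeasurableSet).2
    (h.trans measure_univ.symm)

section NaturalFiltration

variable {Ω β : Type*} {m₀ : MeasurableSpace Ω} [MeasurableSpace β] {ξ : ℕ → Ω → β}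

theorem iSup_comap_range_le (hξ : ∀ k, Measurable (ξ k)) (n : ℕ) :
    ⨆ k ∈ Finset.range n, MeasurableSpace.comap (ξ k) inferInstance ≤ m₀ :=
  iSup₂_le fun k _ => (hξ k).comap_le

theorem measurable_iSup_comap_range {k n : ℕ} (hk : k < n) :
    Measurable[⨆ j ∈ Finset.range n, MeasurableSpace.comap (ξ j) inferInstance] (ξ k) :=
  measurable_iff_comap_le.2 <| le_iSup₂_of_le (f := fun j (_ : j ∈ Finset.range n) =>
    MeasurableSpace.comap (ξ j) inferInstance) k (Finset.mem_range.2 hk) le_rfl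

theorem ProbabilityTheory.iIndepFun.indep_comap_iSup_comap_range {μ : Measure Ω}
    (hξ : ∀ k, Measurable (ξ k)) (hind : iIndepFun ξ μ) (n : ℕ) :
    Indep (MeasurableSpace.comap (ξ n) inferInstance)
      (⨆ k ∈ Finset.range n, MeasurableSpace.comap (ξ k) inferInstance) μ := by
  simpa using indep_iSup_of_disjoint (fun k => (hξ k).comap_le) hind
    (S := {n}) (T := {k | k < n}) (by simp)

end NaturalFiltration

section Walk

variable {Ω β : Type*} {Z ξ : ℕ → Ω → β}

theorem measurable_of_add_increments [MeasurableSpace β] [Add β] [MeasurableAdd₂ β]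
    {m : MeasurableSpace Ω} (hZ : ∀ k ω, Z (k + 1) ω = Z k ω + ξ k ω)
    (h0 : Measurable[m] (Z 0)) : ∀ {n : ℕ}, (∀ k < n, Measurable[m] (ξ k)) → Measurable[m] (Z n)
  | 0, _ => h0
  | n + 1, hξ => by
    rw [show Z (n + 1) = fun ω => Z n ω + ξ n ω from funext (hZ n)]
    exact (measurable_of_add_increments hZ h0 fun k hk => hξ k (by omega)).add
      (hξ n n.lt_succ_self)

theorem exists_finite_ae_mem_of_add_increments [Add β] {m₀ : MeasurableSpace Ω}
    {μ : Measure Ω} (hZ : ∀ k ω, Z (k + 1) ω = Z k ω + ξ k ω) {T₀ S : Set β}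
    (hT₀ : T₀.Finite) (h0 : ∀ᵐ ω ∂μ, Z 0 ω ∈ T₀) (hS : S.Finite) (hξ : ∀ k, ∀ᵐ ω ∂μ, ξ k ω ∈ S) :
    ∀ n, ∃ T : Set β, T.Finite ∧ ∀ᵐ ω ∂μ, Z n ω ∈ T
  | 0 => ⟨T₀, hT₀, h0⟩
  | n + 1 => by
    obtain ⟨T, hT, hZT⟩ := exists_finite_ae_mem_of_add_increments hZ hT₀ h0 hS hξ n
    refine ⟨T + S, hT.add hS, ?_⟩
    filter_upwards [hZT, hξ n] with ω hZω hξω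
    rw [hZ]
    exact Set.add_mem_add hZω hξω

theorem condExp_comp_add_increment_ae_eq_sum {m₀ : MeasurableSpace Ω}
    {μ : Measure Ω} [IsProbabilityMeasure μ] [MeasurableSpace β] [DiscreteMeasurableSpace β]
    [Add β] [MeasurableAdd₂ β] (hZ : ∀ k ω, Z (k + 1) ω = Z k ω + ξ k ω)
    {z₀ : β} (hZ₀ : ∀ ω, Z 0 ω = z₀) (hξ : ∀ k, Measurable (ξ k)) (hind : iIndepFun ξ μ)
    {S : Finset β} (hS : ∀ k, ∀ᵐ ω ∂μ, ξ k ω ∈ S) (g : β → ℝ) (n : ℕ) :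
    μ[fun ω => g (Z (n + 1) ω) | ⨆ k ∈ Finset.range n, MeasurableSpace.comap (ξ k) inferInstance]
      =ᵐ[μ] fun ω => ∑ v ∈ S, g (Z n ω + v) * μ.real (ξ n ⁻¹' {v}) := by
  have hle := iSup_comap_range_le hξ n
  have hZn : Measurable[⨆ k ∈ Finset.range n, MeasurableSpace.comap (ξ k) inferInstance] (Z n) :=
    measurable_of_add_increments hZ (by simp [funext hZ₀]) fun k hk =>
      measurable_iSup_comap_range hk
  obtain ⟨T, hT, hZT⟩ := exists_finite_ae_mem_of_add_increments hZ (Set.finite_singleton z₀)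
    (by simp [hZ₀]) S.finite_toSet hS n
  simp only [hZ]
  exact condExp_comp_ae_eq_sum_of_indep hle (hξ n) (hind.indep_comap_iSup_comap_range hξ n)
    (hS n) (f := fun v ω => g (Z n ω + v))
    (fun v _ => ((Measurable.of_discrete (f := fun z => g (z + v))).comp hZn).stronglyMeasurable)
    fun v _ => integrable_comp_of_ae_mem_finite (hZn.mono hle le_rfl) hT hZT fun z => g (z + v)

end Walk

def steps : Finset (ℤ × ℤ) := {(-1, 0), (1, -1), (0, 1)}

def G21 (z : ℤ × ℤ) : ℤ := z.1 ^ 2 * z.2 + z.1 * z.2 ^ 2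

theorem sum_G21_add_steps (z : ℤ × ℤ) : ∑ v ∈ steps, G21 (z + v) = 3 * G21 z := by
  simp only [steps, G21,
    Finset.sum_insert (show ((-1, 0) : ℤ × ℤ) ∉ {(1, -1), (0, 1)} by decide),
    Finset.sum_insert (show ((1, -1) : ℤ × ℤ) ∉ {(0, 1)} by decide), Finset.sum_singleton,
    Prod.fst_add, Prod.snd_add]
  ring

theorem sum_G21_add_mul_eq (z : ℤ × ℤ) {p : ℤ × ℤ → ℝ} (hp : ∀ v ∈ steps, p v = 1 / 3) :
    ∑ v ∈ steps, (G21 (z + v) : ℝ) * p v = G21 z := by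
  rw [Finset.sum_congr rfl fun v hv => by rw [hp v hv], ← Finset.sum_mul, ← Int.cast_sum,
    sum_G21_add_steps]
  push_cast
  ring

theorem ae_mem_steps {Ω : Type*} {m₀ : MeasurableSpace Ω} {μ : Measure Ω}
    [IsProbabilityMeasure μ] {Y : Ω → ℤ × ℤ} (hY : Measurable Y)
    (h : ∀ v ∈ steps, μ (Y ⁻¹' {v}) = 1 / 3) : ∀ᵐ ω ∂μ, Y ω ∈ steps :=
  ae_mem_of_sum_measure_preimage_eq_one hY <| by
    rw [Finset.sum_congr rfl h]
    simp [steps, ENNReal.mul_inv_cancel]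

theorem stmt_6_general
{Ω : Type*} [MeasurableSpace Ω] (μ : Measure Ω) [IsProbabilityMeasure μ]
    (a b : ℕ)
    (ξ : ℕ → Ω → ℤ × ℤ)
    (hmeas : ∀ n, Measurable (ξ n))
    (hindep : iIndepFun ξ μ)
    (hunif : ∀ n, ∀ v ∈ ({(-1, 0), (1, -1), (0, 1)} : Set (ℤ × ℤ)),
      μ {ω | ξ n ω = v} = 1 / 3)
    (A B : ℕ → Ω → ℤ)
    (hA0 : ∀ ω, A 0 ω = (a : ℤ)) (hB0 : ∀ ω, B 0 ω = (b : ℤ))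
    (hA : ∀ n ω, A (n + 1) ω = A n ω + (ξ n ω).1)
    (hB : ∀ n ω, B (n + 1) ω = B n ω + (ξ n ω).2)
(ℱ : ℕ → MeasurableSpace Ω)
    (hℱ : ∀ n, ℱ n = ⨆ k ∈ Finset.range n, MeasurableSpace.comap (ξ k) inferInstance)
    (G : ℕ → Ω → ℝ)
    (hG : ∀ n ω, G n ω = ((A n ω ^ 2 * B n ω + A n ω * B n ω ^ 2 : ℤ) : ℝ)) :
    ∀ n : ℕ, μ[G (n + 1)|ℱ n] =ᵐ[μ] G n := by
  intro n
  set Z : ℕ → Ω → ℤ × ℤ := fun k ω => (A k ω, B k ω)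
  have hZ : ∀ k ω, Z (k + 1) ω = Z k ω + ξ k ω := fun k ω => Prod.ext (hA k ω) (hB k ω)
  have hZ₀ : ∀ ω, Z 0 ω = ((a : ℤ), (b : ℤ)) := fun ω => Prod.ext (hA0 ω) (hB0 ω)
  have hG' : ∀ k, G k = fun ω => (G21 (Z k ω) : ℝ) := fun k => funext (hG k)
  have hprob : ∀ k, ∀ v ∈ steps, μ (ξ k ⁻¹' {v}) = 1 / 3 := fun k v hv =>
    hunif k v (by simpa [steps] using hv)
  rw [hℱ, hG' n, hG' (n + 1)]
  filter_upwards [condExp_comp_add_increment_ae_eq_sum hZ hZ₀ hmeas hindep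
    (fun k => ae_mem_steps (hmeas k) (hprob k)) (fun z => (G21 z : ℝ)) n] with ω hω
  rw [hω]
  exact sum_G21_add_mul_eq _ fun v hv => by simp [measureReal_def, hprob n v hv]

/-- The process `G₂₁ n = A n ^ 2 * B n + A n * B n ^ 2` is a martingale
with respect to the filtration generated by the steps. -/
theorem stmt_6
{Ω : Type*} [MeasurableSpace Ω] (μ : Measure Ω) [IsProbabilityMeasure μ]
    (a b : ℕ) (ha : 0 < a) (hb : 0 < b)
    (ξ : ℕ → Ω → ℤ × ℤ)
    (hmeas : ∀ n, Measurable (ξ n))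
    (hindep : iIndepFun ξ μ)
    (hunif : ∀ n, ∀ v ∈ ({(-1, 0), (1, -1), (0, 1)} : Set (ℤ × ℤ)),
      μ {ω | ξ n ω = v} = 1 / 3)
    (A B : ℕ → Ω → ℤ)
    (hA0 : ∀ ω, A 0 ω = (a : ℤ)) (hB0 : ∀ ω, B 0 ω = (b : ℤ))
    (hA : ∀ n ω, A (n + 1) ω = A n ω + (ξ n ω).1)
    (hB : ∀ n ω, B (n + 1) ω = B n ω + (ξ n ω).2)
(ℱ : ℕ → MeasurableSpace Ω)
    (hℱ : ∀ n, ℱ n = ⨆ k ∈ Finset.range n, MeasurableSpace.comap (ξ k) inferInstance)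
    (G : ℕ → Ω → ℝ)
    (hG : ∀ n ω, G n ω = ((A n ω ^ 2 * B n ω + A n ω * B n ω ^ 2 : ℤ) : ℝ)) :
    ∀ n : ℕ, μ[G (n + 1)|ℱ n] =ᵐ[μ] G n :=
  stmt_6_general μ a b ξ hmeas hindep hunif A B hA0 hB0 hA hB ℱ hℱ G hG
end

section
/- For every n ≥ 0, with T_n = min{T, n}, one has E[A(T_n)·B(T_n)] + (1/3)·E[T_n] = a·b. -/
/-!
`A(n) B(n) + n/3` is a martingale for the filtration of the steps: a step `v` changes the
product by `A v.2 + B v.1 + v.1 v.2`, and averaged over the three steps this is `-1/3`.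
Stopped at the first time `τ` the walk touches an axis, it keeps its expectation `a b`.
Before `τ` both coordinates stay nonnegative, since a step lowers a coordinate by at most one,
so the stopped martingale is nonnegative and equals `A(n) B(n) + n/3 ≥ n/3` on `{τ = ∞}`.
Hence `(n/3) P(τ = ∞) ≤ a b` for every `n`, so `τ < ∞` almost surely, and there `τ = T`.
-/

open MeasureTheory ProbabilityTheory Filter
open scoped ENNReal

theorem MeasureTheory.Martingale.stoppedProcess {Ω : Type*} {m : MeasurableSpace Ω}
    {μ : Measure Ω} [IsFiniteMeasure μ] {𝒢 : Filtration ℕ m} {f : ℕ → Ω → ℝ} {τ : Ω → ℕ∞}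
    (hf : Martingale f 𝒢 μ) (hτ : IsStoppingTime 𝒢 τ) :
    Martingale (stoppedProcess f τ) 𝒢 μ := by
  refine martingale_iff.2 ⟨?_, hf.submartingale.stoppedProcess hτ⟩
  convert (hf.neg.submartingale.stoppedProcess hτ).neg using 1
  ext n ω
  simp [MeasureTheory.stoppedProcess]

lemma MeasureTheory.stoppedProcess_apply_of_eq_coe {Ω β : Type*} {u : ℕ → Ω → β}
    {τ : Ω → ℕ∞} {ω : Ω} {t : ℕ} (h : τ ω = t) (n : ℕ) :
    stoppedProcess u τ n ω = u (min n t) ω := by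
  simp only [stoppedProcess, h]
  rfl

namespace TriangleWalk

def steps : Finset (ℤ × ℤ) := {(-1, 0), (1, -1), (0, 1)}

section UniformStep

variable {Ω : Type*} [MeasurableSpace Ω] {μ : Measure Ω} [IsProbabilityMeasure μ]
  {Y : Ω → ℤ × ℤ}

lemma ae_mem_steps (hY : Measurable Y) (hunif : ∀ v ∈ steps, μ {ω | Y ω = v} = 1 / 3) :
    ∀ᵐ ω ∂μ, Y ω ∈ steps := by
  have hmass : μ (⋃ v ∈ steps, Y ⁻¹' {v}) = 1 := by
    rw [measure_biUnion_finset (fun v _ w _ hvw => (Set.disjoint_singleton.2 hvw).preimage Y)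
      fun v _ => hY (measurableSet_singleton v)]
    refine (Finset.sum_congr rfl hunif).trans ?_
    simp [steps, ENNReal.mul_inv_cancel]
  refine (ae_iff_measure_eq (hY steps.measurableSet).nullMeasurableSet).2 ?_
  rw [measure_univ]
  convert hmass using 2
  ext ω
  simp

lemma integral_comp_eq_average_steps (hY : Measurable Y)
    (hunif : ∀ v ∈ steps, μ {ω | Y ω = v} = 1 / 3) (φ : ℤ × ℤ → ℝ) :
    ∫ ω, φ (Y ω) ∂μ = (∑ v ∈ steps, φ v) / 3 := by
  have hfib (v : ℤ × ℤ) : MeasurableSet {ω | Y ω = v} := hY (measurableSet_singleton v)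
  have hsum : (fun ω => φ (Y ω)) =ᵐ[μ]
      fun ω => ∑ v ∈ steps, {ω | Y ω = v}.indicator (fun _ => φ v) ω := by
    filter_upwards [ae_mem_steps hY hunif] with ω hω
    simp [Set.indicator_apply, hω]
  rw [integral_congr_ae hsum, integral_finsetSum _ fun v _ =>
    (integrable_const _).indicator (hfib v), Finset.sum_div]
  refine Finset.sum_congr rfl fun v hv => ?_
  rw [integral_indicator_const _ (hfib v), measureReal_def, hunif v hv]
  simp only [one_div, ENNReal.toReal_inv, ENNReal.toReal_ofNat, smul_eq_mul]
  ring

end UniformStep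

section PastFiltration

variable {Ω β : Type*} {mΩ : MeasurableSpace Ω} [mβ : MeasurableSpace β] {μ : Measure Ω}
  {ξ : ℕ → Ω → β}

/-- The paper's `ξ(k)` is `ξ (k - 1)` here, so this is its `F_n`. -/
def pastFiltration (hξ : ∀ n, Measurable (ξ n)) : Filtration ℕ mΩ where
  seq n := ⨆ i ∈ Set.Iio n, mβ.comap (ξ i)
  mono' _ _ hmn := biSup_mono fun _ hi => lt_of_lt_of_le hi hmn
  le' _ := iSup₂_le fun i _ => (hξ i).comap_le

lemma measurable_pastFiltration (hξ : ∀ n, Measurable (ξ n)) {i n : ℕ} (hin : i < n) :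
    Measurable[pastFiltration hξ n] (ξ i) :=
  Measurable.of_comap_le (le_iSup₂ (f := fun i (_ : i ∈ Set.Iio n) => mβ.comap (ξ i)) i hin)

lemma indep_pastFiltration (hξ : ∀ n, Measurable (ξ n)) (hind : iIndepFun ξ μ) (n : ℕ) :
    Indep (pastFiltration hξ n) (mβ.comap (ξ n)) μ := by
  have := indep_iSup_of_disjoint (fun i => (hξ i).comap_le) hind.iIndep
    (S := Set.Iio n) (T := {n}) (Set.disjoint_singleton_right.2 (lt_irrefl n))
  rwa [iSup_singleton] at this

lemma setIntegral_mul_comp_eq (hξ : ∀ n, Measurable (ξ n)) (hind : iIndepFun ξ μ) {n : ℕ}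
    {s : Set Ω} (hs : MeasurableSet[pastFiltration hξ n] s) {f : Ω → ℝ}
    (hf : Measurable[pastFiltration hξ n] f) {φ : β → ℝ} (hφ : Measurable φ) :
    ∫ ω in s, f ω * φ (ξ n ω) ∂μ = (∫ ω in s, f ω ∂μ) * ∫ ω, φ (ξ n ω) ∂μ := by
  have hle := (pastFiltration hξ).le n
  have hfs : Measurable[pastFiltration hξ n] (s.indicator f) := hf.indicator hs
  have hindep : IndepFun (s.indicator f) (fun ω => φ (ξ n ω)) μ := by
    rw [IndepFun_iff_Indep]
    exact indep_of_indep_of_le_right (indep_of_indep_of_le_left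
      (indep_pastFiltration hξ hind n) hfs.comap_le) (hφ.comp (comap_measurable _)).comap_le
  rw [← integral_indicator (hle s hs), ← integral_indicator (hle s hs)]
  simp_rw [Set.indicator_mul_left]
  exact hindep.integral_mul_eq_mul_integral (hfs.mono hle le_rfl).aestronglyMeasurable
    (hφ.comp (hξ n)).aestronglyMeasurable

end PastFiltration

section Pathwise

variable {Ω : Type*} {ξ X : ℕ → Ω → ℤ × ℤ} {x₀ : ℤ × ℤ}

noncomputable def compensatedProduct (X : ℕ → Ω → ℤ × ℤ) (n : ℕ) (ω : Ω) : ℝ :=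
  ((X n ω).1 * (X n ω).2 : ℤ) + n / 3

/-- `⊤` if the walk never reaches an axis, where `sInf {n | …}` would be `0`. -/
noncomputable def axisHittingTime (X : ℕ → Ω → ℤ × ℤ) : Ω → ℕ∞ :=
  hittingAfter (fun n ω => (X n ω).1 * (X n ω).2) {0} 0

lemma axisHittingTime_eq_sInf {ω : Ω} (h : axisHittingTime X ω ≠ ⊤) :
    axisHittingTime X ω = (sInf {n | (X n ω).1 * (X n ω).2 = 0} : ℕ) := by
  simp only [axisHittingTime, hittingAfter] at h ⊢
  split_ifs at h ⊢
  · simp only [zero_le, true_and, Set.mem_singleton_iff]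
    rfl
  · exact absurd rfl h

lemma nonneg_add_step {p v : ℤ × ℤ} (hp : 0 ≤ p) (hpz : p.1 * p.2 ≠ 0) (hv : v ∈ steps) :
    0 ≤ p + v := by
  obtain ⟨hp1, hp2⟩ := hp
  have h1 : p.1 ≠ 0 := left_ne_zero_of_mul hpz
  have h2 : p.2 ≠ 0 := right_ne_zero_of_mul hpz
  simp only [steps, Finset.mem_insert, Finset.mem_singleton] at hv
  rcases hv with rfl | rfl | rfl <;> constructor <;> simp at * <;> omega

lemma walk_nonneg_of_le_axisHittingTime (hx₀ : 0 ≤ x₀) (hX0 : ∀ ω, X 0 ω = x₀)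
    (hX : ∀ n ω, X (n + 1) ω = X n ω + ξ n ω) {ω : Ω} (hsteps : ∀ n, ξ n ω ∈ steps) {k : ℕ}
    (hk : (k : ℕ∞) ≤ axisHittingTime X ω) : 0 ≤ X k ω := by
  induction k with
  | zero => rw [hX0]; exact hx₀
  | succ k ih =>
    have hlt : (k : ℕ∞) < axisHittingTime X ω :=
      lt_of_lt_of_le (by exact_mod_cast k.lt_succ_self) hk
    rw [hX]
    exact nonneg_add_step (ih hlt.le) (notMem_of_lt_hittingAfter hlt (Nat.zero_le k)) (hsteps k)

lemma div_three_le_compensatedProduct (hx₀ : 0 ≤ x₀) (hX0 : ∀ ω, X 0 ω = x₀)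
    (hX : ∀ n ω, X (n + 1) ω = X n ω + ξ n ω) {ω : Ω} (hsteps : ∀ n, ξ n ω ∈ steps) {k : ℕ}
    (hk : (k : ℕ∞) ≤ axisHittingTime X ω) : (k : ℝ) / 3 ≤ compensatedProduct X k ω := by
  obtain ⟨h1, h2⟩ := walk_nonneg_of_le_axisHittingTime hx₀ hX0 hX hsteps hk
  have : (0 : ℝ) ≤ ((X k ω).1 * (X k ω).2 : ℤ) := by exact_mod_cast mul_nonneg h1 h2
  simp only [compensatedProduct]
  linarith

lemma stoppedProcess_compensatedProduct_nonneg (hx₀ : 0 ≤ x₀) (hX0 : ∀ ω, X 0 ω = x₀)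
    (hX : ∀ n ω, X (n + 1) ω = X n ω + ξ n ω) {ω : Ω} (hsteps : ∀ n, ξ n ω ∈ steps) (n : ℕ) :
    0 ≤ stoppedProcess (compensatedProduct X) (axisHittingTime X) n ω := by
  rcases le_total (n : ℕ∞) (axisHittingTime X ω) with h | h
  · rw [stoppedProcess_eq_of_le h]
    exact (div_nonneg n.cast_nonneg zero_le_three).trans
      (div_three_le_compensatedProduct hx₀ hX0 hX hsteps h)
  · rw [stoppedProcess_eq_of_ge h]
    lift axisHittingTime X ω to ℕ using ne_top_of_le_ne_top (by simp) h with t ht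
    simpa using (div_nonneg t.cast_nonneg zero_le_three).trans
      (div_three_le_compensatedProduct hx₀ hX0 hX hsteps ht.le)

lemma div_three_le_stoppedProcess_of_eq_top (hx₀ : 0 ≤ x₀) (hX0 : ∀ ω, X 0 ω = x₀)
    (hX : ∀ n ω, X (n + 1) ω = X n ω + ξ n ω) {ω : Ω} (hsteps : ∀ n, ξ n ω ∈ steps)
    (hτ : axisHittingTime X ω = ⊤) (n : ℕ) :
    (n : ℝ) / 3 ≤ stoppedProcess (compensatedProduct X) (axisHittingTime X) n ω := by
  have hn : (n : ℕ∞) ≤ axisHittingTime X ω := by simp [hτ]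
  rw [stoppedProcess_eq_of_le hn]
  exact div_three_le_compensatedProduct hx₀ hX0 hX hsteps hn

end Pathwise

open scoped Pointwise

section Walk

variable {Ω : Type*} [MeasurableSpace Ω] {μ : Measure Ω} [IsProbabilityMeasure μ]
  {ξ X : ℕ → Ω → ℤ × ℤ} {x₀ : ℤ × ℤ}

lemma measurable_walk (hξ : ∀ n, Measurable (ξ n)) (hX0 : ∀ ω, X 0 ω = x₀)
    (hX : ∀ n ω, X (n + 1) ω = X n ω + ξ n ω) {k n : ℕ} (hkn : k ≤ n) :
    Measurable[pastFiltration hξ n] (X k) := by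
  induction k with
  | zero =>
    rw [funext hX0]
    exact measurable_const
  | succ k ih =>
    rw [funext (hX k)]
    exact (ih (by omega)).add (measurable_pastFiltration hξ hkn)

lemma ae_walk_mem (hξ : ∀ n, Measurable (ξ n))
    (hunif : ∀ n, ∀ v ∈ steps, μ {ω | ξ n ω = v} = 1 / 3) (hX0 : ∀ ω, X 0 ω = x₀)
    (hX : ∀ n ω, X (n + 1) ω = X n ω + ξ n ω) :
    ∀ᵐ ω ∂μ, ∀ n, X n ω ∈ {x₀} + n • steps := by
  filter_upwards [ae_all_iff.2 fun n => ae_mem_steps (hξ n) (hunif n)] with ω hω n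
  induction n with
  | zero => simp [hX0]
  | succ n ih =>
    rw [hX, succ_nsmul, ← add_assoc]
    exact Finset.add_mem_add ih (hω n)

lemma integrable_comp_walk (hξ : ∀ n, Measurable (ξ n))
    (hunif : ∀ n, ∀ v ∈ steps, μ {ω | ξ n ω = v} = 1 / 3) (hX0 : ∀ ω, X 0 ω = x₀)
    (hX : ∀ n ω, X (n + 1) ω = X n ω + ξ n ω) (φ : ℤ × ℤ → ℝ) (n : ℕ) :
    Integrable (fun ω => φ (X n ω)) μ := by
  have hmeas : Measurable (X n) :=
    (measurable_walk hξ hX0 hX le_rfl).mono ((pastFiltration hξ).le n) le_rfl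
  refine Integrable.of_bound ((measurable_of_countable φ).comp hmeas).aestronglyMeasurable
    (∑ v ∈ {x₀} + n • steps, |φ v|) ?_
  filter_upwards [ae_walk_mem hξ hunif hX0 hX] with ω hω
  exact Finset.single_le_sum (f := fun v => |φ v|) (fun _ _ => abs_nonneg _) (hω n)

lemma setIntegral_comp_walk_step (hξ : ∀ n, Measurable (ξ n)) (hind : iIndepFun ξ μ)
    (hunif : ∀ n, ∀ v ∈ steps, μ {ω | ξ n ω = v} = 1 / 3) (hX0 : ∀ ω, X 0 ω = x₀)
    (hX : ∀ n ω, X (n + 1) ω = X n ω + ξ n ω) {n : ℕ} {s : Set Ω}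
    (hs : MeasurableSet[pastFiltration hξ n] s) (g : ℤ × ℤ → ℤ × ℤ → ℝ) :
    ∫ ω in s, g (X n ω) (ξ n ω) ∂μ = ∫ ω in s, (∑ v ∈ steps, g (X n ω) v) / 3 ∂μ := by
  have hXn := measurable_walk hξ hX0 hX (le_refl n)
  let δ (v w : ℤ × ℤ) : ℝ := if w = v then 1 else 0
  have hδ {v : ℤ × ℤ} (hv : v ∈ steps) : ∫ ω, δ v (ξ n ω) ∂μ = 1 / 3 := by
    rw [integral_comp_eq_average_steps (hξ n) (hunif n)]
    simp [δ, hv]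
  calc ∫ ω in s, g (X n ω) (ξ n ω) ∂μ
      = ∫ ω in s, ∑ v ∈ steps, g (X n ω) v * δ v (ξ n ω) ∂μ := by
        refine integral_congr_ae (ae_restrict_of_ae ?_)
        filter_upwards [ae_mem_steps (hξ n) (hunif n)] with ω hω
        simp [δ, hω]
    _ = ∑ v ∈ steps, (∫ ω in s, g (X n ω) v ∂μ) / 3 := by
        rw [integral_finsetSum]
        · refine Finset.sum_congr rfl fun v hv => ?_
          rw [setIntegral_mul_comp_eq hξ hind hs (f := fun ω => g (X n ω) v)
            ((measurable_of_countable (g · v)).comp hXn) (measurable_of_countable _), hδ hv,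
            mul_one_div]
        · exact fun v _ => ((integrable_comp_walk hξ hunif hX0 hX (g · v) n).mul_bdd
            ((measurable_of_countable (δ v)).comp (hξ n)).aestronglyMeasurable (c := 1)
            (ae_of_all _ fun ω => by by_cases h : ξ n ω = v <;> simp [δ, h])).integrableOn
    _ = ∫ ω in s, (∑ v ∈ steps, g (X n ω) v) / 3 ∂μ := by
        rw [integral_div, integral_finsetSum _ fun v _ =>
          (integrable_comp_walk hξ hunif hX0 hX (g · v) n).integrableOn, Finset.sum_div]

lemma martingale_compensatedProduct (hξ : ∀ n, Measurable (ξ n)) (hind : iIndepFun ξ μ)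
    (hunif : ∀ n, ∀ v ∈ steps, μ {ω | ξ n ω = v} = 1 / 3) (hX0 : ∀ ω, X 0 ω = x₀)
    (hX : ∀ n ω, X (n + 1) ω = X n ω + ξ n ω) :
    Martingale (compensatedProduct X) (pastFiltration hξ) μ := by
  refine martingale_of_setIntegral_eq_succ (fun n => ?_) (fun n => integrable_comp_walk hξ hunif
    hX0 hX (fun p => ((p.1 * p.2 : ℤ) : ℝ) + n / 3) n) fun n s hs => ?_
  · exact ((measurable_of_countable fun p : ℤ × ℤ => ((p.1 * p.2 : ℤ) : ℝ) + n / 3).comp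
      (measurable_walk hξ hX0 hX le_rfl)).stronglyMeasurable
  · let g (p v : ℤ × ℤ) : ℝ := (((p + v).1 * (p + v).2 : ℤ) : ℝ) + (n + 1 : ℕ) / 3
    calc ∫ ω in s, compensatedProduct X n ω ∂μ
        = ∫ ω in s, (∑ v ∈ steps, g (X n ω) v) / 3 ∂μ := by
          congr 1
          funext ω
          simp [g, compensatedProduct, steps]
          ring
      _ = ∫ ω in s, g (X n ω) (ξ n ω) ∂μ :=
          (setIntegral_comp_walk_step hξ hind hunif hX0 hX hs g).symm
      _ = ∫ ω in s, compensatedProduct X (n + 1) ω ∂μ := by simp [g, compensatedProduct, hX]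

lemma isStoppingTime_axisHittingTime (hξ : ∀ n, Measurable (ξ n)) (hX0 : ∀ ω, X 0 ω = x₀)
    (hX : ∀ n ω, X (n + 1) ω = X n ω + ξ n ω) :
    IsStoppingTime (pastFiltration hξ) (axisHittingTime X) :=
  Adapted.isStoppingTime_hittingAfter (fun _ => (measurable_of_countable fun p : ℤ × ℤ =>
    p.1 * p.2).comp (measurable_walk hξ hX0 hX le_rfl)) (measurableSet_singleton 0)

lemma integral_stoppedProcess_compensatedProduct (hξ : ∀ n, Measurable (ξ n))
    (hind : iIndepFun ξ μ) (hunif : ∀ n, ∀ v ∈ steps, μ {ω | ξ n ω = v} = 1 / 3)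
    (hX0 : ∀ ω, X 0 ω = x₀) (hX : ∀ n ω, X (n + 1) ω = X n ω + ξ n ω) (n : ℕ) :
    ∫ ω, stoppedProcess (compensatedProduct X) (axisHittingTime X) n ω ∂μ = x₀.1 * x₀.2 := by
  have h := (Martingale.stoppedProcess (martingale_compensatedProduct hξ hind hunif hX0 hX)
    (isStoppingTime_axisHittingTime hξ hX0 hX)).setIntegral_eq (Nat.zero_le n) MeasurableSet.univ
  rw [setIntegral_univ, setIntegral_univ] at h
  rw [← h]
  have h0 (ω : Ω) : stoppedProcess (compensatedProduct X) (axisHittingTime X) 0 ω =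
      compensatedProduct X 0 ω := stoppedProcess_eq_of_le (by simpa using zero_le)
  simp [h0, compensatedProduct, hX0]

lemma measure_axisHittingTime_eq_top (hξ : ∀ n, Measurable (ξ n)) (hind : iIndepFun ξ μ)
    (hunif : ∀ n, ∀ v ∈ steps, μ {ω | ξ n ω = v} = 1 / 3) (hx₀ : 0 ≤ x₀)
    (hX0 : ∀ ω, X 0 ω = x₀) (hX : ∀ n ω, X (n + 1) ω = X n ω + ξ n ω) :
    μ {ω | axisHittingTime X ω = ⊤} = 0 := by
  have hsteps : ∀ᵐ ω ∂μ, ∀ n, ξ n ω ∈ steps :=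
    ae_all_iff.2 fun n => ae_mem_steps (hξ n) (hunif n)
  have hbound (n : ℕ) : (n / 3 : ℝ) * μ.real {ω | axisHittingTime X ω = ⊤} ≤ x₀.1 * x₀.2 := by
    have hsub : {ω | axisHittingTime X ω = ⊤} ≤ᵐ[μ]
        {ω | (n / 3 : ℝ) ≤ stoppedProcess (compensatedProduct X) (axisHittingTime X) n ω} := by
      filter_upwards [hsteps] with ω hω hτ
      exact div_three_le_stoppedProcess_of_eq_top hx₀ hX0 hX hω hτ n
    calc (n / 3 : ℝ) * μ.real {ω | axisHittingTime X ω = ⊤}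
        ≤ (n / 3 : ℝ) * μ.real {ω | (n / 3 : ℝ) ≤
            stoppedProcess (compensatedProduct X) (axisHittingTime X) n ω} :=
          mul_le_mul_of_nonneg_left
            (ENNReal.toReal_mono (measure_ne_top _ _) (measure_mono_ae hsub)) (by positivity)
      _ ≤ ∫ ω, stoppedProcess (compensatedProduct X) (axisHittingTime X) n ω ∂μ :=
          mul_meas_ge_le_integral_of_nonneg
            (hsteps.mono fun ω hω => stoppedProcess_compensatedProduct_nonneg hx₀ hX0 hX hω n)
            (integrable_stoppedProcess (isStoppingTime_axisHittingTime hξ hX0 hX)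
              (fun k => integrable_comp_walk hξ hunif hX0 hX
                (fun p => ((p.1 * p.2 : ℤ) : ℝ) + k / 3) k) n) _
      _ = x₀.1 * x₀.2 := integral_stoppedProcess_compensatedProduct hξ hind hunif hX0 hX n
  refine (measureReal_eq_zero_iff (measure_ne_top _ _)).1 (le_antisymm ?_ measureReal_nonneg)
  by_contra! hpos
  obtain ⟨n, hn⟩ := exists_nat_gt (3 * (x₀.1 * x₀.2) / μ.real {ω | axisHittingTime X ω = ⊤})
  rw [div_lt_iff₀ hpos] at hn
  linarith [hbound n]

theorem integral_stopped_add_integral_min (hξ : ∀ n, Measurable (ξ n)) (hind : iIndepFun ξ μ)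
    (hunif : ∀ n, ∀ v ∈ steps, μ {ω | ξ n ω = v} = 1 / 3) (hx₀ : 0 ≤ x₀)
    (hX0 : ∀ ω, X 0 ω = x₀) (hX : ∀ n ω, X (n + 1) ω = X n ω + ξ n ω) {T : Ω → ℕ}
    (hT : ∀ ω, T ω = sInf {n | (X n ω).1 * (X n ω).2 = 0}) (n : ℕ) :
    (∫ ω, (((X (min (T ω) n) ω).1 * (X (min (T ω) n) ω).2 : ℤ) : ℝ) ∂μ)
      + (1 / 3) * ∫ ω, (min (T ω) n : ℝ) ∂μ = x₀.1 * x₀.2 := by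
  have hτ := isStoppingTime_axisHittingTime hξ hX0 hX
  have hτT : ∀ᵐ ω ∂μ, axisHittingTime X ω = T ω := by
    filter_upwards [measure_eq_zero_iff_ae_notMem.1
      (measure_axisHittingTime_eq_top hξ hind hunif hx₀ hX0 hX)] with ω hω
    rw [hT, axisHittingTime_eq_sInf hω]
  let Z (k : ℕ) (ω : Ω) : ℝ := ((X k ω).1 * (X k ω).2 : ℤ)
  let t (k : ℕ) (_ : Ω) : ℝ := k
  have hZ : (fun ω => Z (min (T ω) n) ω) =ᵐ[μ] stoppedProcess Z (axisHittingTime X) n := by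
    filter_upwards [hτT] with ω hω
    rw [stoppedProcess_apply_of_eq_coe hω, min_comm]
  have ht : (fun ω => (min (T ω) n : ℝ)) =ᵐ[μ] stoppedProcess t (axisHittingTime X) n := by
    filter_upwards [hτT] with ω hω
    simp [stoppedProcess_apply_of_eq_coe hω, t, min_comm]
  have hZint : Integrable (stoppedProcess Z (axisHittingTime X) n) μ :=
    integrable_stoppedProcess hτ (fun k => integrable_comp_walk hξ hunif hX0 hX
      (fun p => ((p.1 * p.2 : ℤ) : ℝ)) k) n
  have htint : Integrable (stoppedProcess t (axisHittingTime X) n) μ :=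
    integrable_stoppedProcess hτ (fun _ => integrable_const _) n
  rw [integral_congr_ae hZ, integral_congr_ae ht, ← integral_const_mul,
    ← integral_add hZint (htint.const_mul _),
    ← integral_stoppedProcess_compensatedProduct hξ hind hunif hX0 hX n]
  congr 1
  funext ω
  simp only [stoppedProcess, compensatedProduct, Z, t]
  ring

end Walk

end TriangleWalk

theorem stmt_7_general
{Ω : Type*} [MeasurableSpace Ω] (μ : Measure Ω) [IsProbabilityMeasure μ]
    (a b : ℕ)
    (ξ : ℕ → Ω → ℤ × ℤ)
    (hmeas : ∀ n, Measurable (ξ n))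
    (hindep : iIndepFun ξ μ)
    (hunif : ∀ n, ∀ v ∈ ({(-1, 0), (1, -1), (0, 1)} : Set (ℤ × ℤ)),
      μ {ω | ξ n ω = v} = 1 / 3)
    (A B : ℕ → Ω → ℤ)
    (hA0 : ∀ ω, A 0 ω = (a : ℤ)) (hB0 : ∀ ω, B 0 ω = (b : ℤ))
    (hA : ∀ n ω, A (n + 1) ω = A n ω + (ξ n ω).1)
    (hB : ∀ n ω, B (n + 1) ω = B n ω + (ξ n ω).2)
(T : Ω → ℕ)
    (hT : ∀ ω, T ω = sInf {n | A n ω * B n ω = 0}) :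
    ∀ n : ℕ,
      (∫ ω, ((A (min (T ω) n) ω * B (min (T ω) n) ω : ℤ) : ℝ) ∂μ)
        + (1 / 3) * (∫ ω, (min (T ω) n : ℝ) ∂μ) = (a : ℝ) * b := by
  intro n
  have hsteps (k : ℕ) : ∀ v ∈ TriangleWalk.steps, μ {ω | ξ k ω = v} = 1 / 3 :=
    fun v hv => hunif k v (by simpa [TriangleWalk.steps] using hv)
  have key := TriangleWalk.integral_stopped_add_integral_min (X := fun k ω => (A k ω, B k ω))
    hmeas hindep hsteps (x₀ := ((a : ℤ), (b : ℤ))) ⟨a.cast_nonneg, b.cast_nonneg⟩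
    (by simp [hA0, hB0]) (by simp [hA, hB, Prod.ext_iff]) hT n
  simpa using key

/-- For the truncated stopping time `T_n = min (T, n)`,
`E[A(T_n) * B(T_n)] + (1/3) * E[T_n] = a * b`. -/
theorem stmt_7
{Ω : Type*} [MeasurableSpace Ω] (μ : Measure Ω) [IsProbabilityMeasure μ]
    (a b : ℕ) (ha : 0 < a) (hb : 0 < b)
    (ξ : ℕ → Ω → ℤ × ℤ)
    (hmeas : ∀ n, Measurable (ξ n))
    (hindep : iIndepFun ξ μ)
    (hunif : ∀ n, ∀ v ∈ ({(-1, 0), (1, -1), (0, 1)} : Set (ℤ × ℤ)),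
      μ {ω | ξ n ω = v} = 1 / 3)
    (A B : ℕ → Ω → ℤ)
    (hA0 : ∀ ω, A 0 ω = (a : ℤ)) (hB0 : ∀ ω, B 0 ω = (b : ℤ))
    (hA : ∀ n ω, A (n + 1) ω = A n ω + (ξ n ω).1)
    (hB : ∀ n ω, B (n + 1) ω = B n ω + (ξ n ω).2)
(T : Ω → ℕ)
    (hT : ∀ ω, T ω = sInf {n | A n ω * B n ω = 0}) :
    ∀ n : ℕ,
      (∫ ω, ((A (min (T ω) n) ω * B (min (T ω) n) ω : ℤ) : ℝ) ∂μ)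
        + (1 / 3) * (∫ ω, (min (T ω) n : ℝ) ∂μ) = (a : ℝ) * b :=
  stmt_7_general μ a b ξ hmeas hindep hunif A B hA0 hB0 hA hB T hT
end

section
/- For every n ≥ 0, with T_n = min{T, n}, one has E[A(T_n)²·B(T_n) + A(T_n)·B(T_n)²] = a·b·(a+b). -/
/-!
For a walk whose steps `(-1, 0)`, `(1, -1)`, `(0, 1)` each have probability `1/3`, any
`f : ℤ × ℤ → ℝ` with `f (x - 1, y) + f (x + 1, y - 1) + f (x, y + 1) = 3 f (x, y)` gives a
martingale `f (X n)` for the filtration of the steps; `x²y + xy²` is such a function. Optional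
stopping at the bounded hitting time of the axes, truncated at `n`, gives
`E[φ (X (τ ∧ n))] = φ (a, b)`. That stopping time is `min T n` only where `T` is finite
(`sInf ∅ = 0`), and `T` is finite almost surely. The first coordinate is itself an integer-valued
martingale with increments in `{-1, 0, 1}`. By the second Borel–Cantelli lemma it moves
infinitely often, so it cannot converge. A martingale with bounded increments that is bounded
below converges, so this one is unbounded below, and starting from `a > 0` it must hit `0`.
-/

open MeasureTheory ProbabilityTheory Filter
open scoped ENNReal NNReal Pointwise Topology

section

variable {Ω : Type*} {mΩ : MeasurableSpace Ω} {μ : Measure Ω}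

lemma MeasureTheory.Martingale.integral_stoppedValue_eq [IsFiniteMeasure μ]
    {𝒢 : Filtration ℕ mΩ} {f : ℕ → Ω → ℝ} (hf : Martingale f 𝒢 μ) {τ : Ω → ℕ∞}
    (hτ : IsStoppingTime 𝒢 τ) {N : ℕ} (hbdd : ∀ ω, τ ω ≤ N) :
    ∫ ω, stoppedValue f τ ω ∂μ = ∫ ω, f 0 ω ∂μ := by
  have h₀ := isStoppingTime_const 𝒢 0
  have hle : (fun _ => ((0 : ℕ) : ℕ∞)) ≤ τ := fun ω => by simp
  have hup := hf.submartingale.expected_stoppedValue_mono h₀ hτ hle hbdd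
  have hdown := hf.neg.submartingale.expected_stoppedValue_mono h₀ hτ hle hbdd
  simp only [stoppedValue, Pi.neg_apply, integral_neg, neg_le_neg_iff] at hup hdown
  exact le_antisymm hdown hup

/-- Bounded below would force convergence, and a convergent integer sequence is eventually
constant. -/
lemma MeasureTheory.Martingale.ae_not_bddBelow_of_frequently_ne [IsFiniteMeasure μ]
    {𝒢 : Filtration ℕ mΩ} {Z : ℕ → Ω → ℤ} (hZ : Martingale (fun n ω => (Z n ω : ℝ)) 𝒢 μ)
    {R : ℝ≥0} (hbdd : ∀ᵐ ω ∂μ, ∀ n, |(Z (n + 1) ω : ℝ) - Z n ω| ≤ R)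
    (hmove : ∀ᵐ ω ∂μ, ∃ᶠ n in atTop, Z (n + 1) ω ≠ Z n ω) :
    ∀ᵐ ω ∂μ, ¬ BddBelow (Set.range fun n => (Z n ω : ℝ)) := by
  filter_upwards [hZ.bddAbove_range_iff_bddBelow_range hbdd,
    hZ.submartingale.bddAbove_iff_exists_tendsto hbdd, hmove] with ω hbdd_iff hconv hfreq hbelow
  obtain ⟨c, hc⟩ := hconv.1 (hbdd_iff.2 hbelow)
  have hdiff : Tendsto (fun n => (Z (n + 1) ω : ℝ) - Z n ω) atTop (𝓝 0) := by
    simpa using (hc.comp (tendsto_add_atTop_nat 1)).sub hc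
  obtain ⟨n, hne, hsmall⟩ :=
    (hfreq.and_eventually (Metric.tendsto_nhds.1 hdiff 1 one_pos)).exists
  rw [Real.dist_eq, sub_zero, ← Int.cast_sub, ← Int.cast_abs, ← Int.cast_one, Int.cast_lt] at hsmall
  exact hne (by rw [abs_lt] at hsmall; omega)

lemma ProbabilityTheory.iIndepFun.ae_frequently_mem [IsProbabilityMeasure μ] {β : Type*}
    [MeasurableSpace β] {ξ : ℕ → Ω → β} (hξ : ∀ n, Measurable (ξ n)) (hind : iIndepFun ξ μ)
    {t : Set β} (ht : MeasurableSet t) (hsum : ∑' n, μ (ξ n ⁻¹' t) = ∞) :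
    ∀ᵐ ω ∂μ, ∃ᶠ n in atTop, ξ n ω ∈ t := by
  have hindSet : iIndepSet (fun n => ξ n ⁻¹' t) μ :=
    (iIndepSet_iff_iIndep _ _).2 <| iIndep_of_iIndep_of_le hind fun n =>
      MeasurableSpace.generateFrom_le fun _ hs => hs ▸ ⟨t, ht, rfl⟩
  have hlimsup := measure_limsup_eq_one (fun n => hξ n ht) hindSet hsum
  have hmeas := MeasurableSet.measurableSet_limsup fun n => hξ n ht
  filter_upwards [(ae_iff_measure_eq hmeas.nullMeasurableSet).2 (hlimsup.trans measure_univ.symm)]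
    with ω hω using mem_limsup_iff_frequently_mem.1 hω

lemma ae_mem_of_sum_measure_preimage_singleton_eq_one [IsProbabilityMeasure μ] {β : Type*}
    [MeasurableSpace β] [MeasurableSingletonClass β] {Y : Ω → β} (hY : Measurable Y)
    {V : Finset β} (hV : ∑ v ∈ V, μ (Y ⁻¹' {v}) = 1) : ∀ᵐ ω ∂μ, Y ω ∈ V := by
  rw [sum_measure_preimage_singleton V fun v _ => hY (measurableSet_singleton v)] at hV
  exact (ae_iff_measure_eq (hY V.measurableSet).nullMeasurableSet).2 (hV.trans measure_univ.symm)

lemma integrable_comp_of_ae_mem_finite_s8 [IsFiniteMeasure μ] {β : Type*} [MeasurableSpace β]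
    [MeasurableSingletonClass β] [Countable β] {Y : Ω → β} (hY : Measurable Y) {S : Set β}
    (hS : S.Finite) (hYS : ∀ᵐ ω ∂μ, Y ω ∈ S) (f : β → ℝ) : Integrable (fun ω => f (Y ω)) μ := by
  obtain ⟨C, hC⟩ := (hS.image fun x => ‖f x‖).bddAbove
  refine Integrable.of_bound (measurable_of_countable f |>.comp hY).aestronglyMeasurable C ?_
  filter_upwards [hYS] with ω hω using hC ⟨_, hω, rfl⟩

lemma ProbabilityTheory.IndepFun.setIntegral_preimage_eq_mul {β : Type*} [MeasurableSpace β]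
    {Y : Ω → β} {g : Ω → ℝ} (hYg : IndepFun Y g μ) (hY : Measurable Y)
    (hg : AEStronglyMeasurable g μ) {t : Set β} (ht : MeasurableSet t) :
    ∫ ω in Y ⁻¹' t, g ω ∂μ = μ.real (Y ⁻¹' t) * ∫ ω, g ω ∂μ := by
  have hind : IndepFun ((Y ⁻¹' t).indicator (1 : Ω → ℝ)) g μ :=
    hYg.comp (measurable_one.indicator ht) measurable_id
  have hmul : (Y ⁻¹' t).indicator g = (Y ⁻¹' t).indicator (1 : Ω → ℝ) * g := by
    ext ω; by_cases h : ω ∈ Y ⁻¹' t <;> simp [h]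
  rw [← integral_indicator (hY ht), ← integral_indicator_one (hY ht), hmul,
    hind.integral_mul_eq_mul_integral ((measurable_one.indicator (hY ht)).aestronglyMeasurable) hg]

lemma hittingBtwn_zero_eq_min_sInf {β : Type*} {u : ℕ → Ω → β} {s : Set β} {ω : Ω}
    (h : ∃ k, u k ω ∈ s) (n : ℕ) : hittingBtwn u s 0 n ω = min (sInf {k | u k ω ∈ s}) n := by
  have hmem := Nat.sInf_mem h
  refine le_antisymm (le_min ?_ (hittingBtwn_le ω)) ?_
  · rcases le_or_gt (sInf {k | u k ω ∈ s}) n with hle | hlt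
    · exact hittingBtwn_le_of_mem (Nat.zero_le _) hle hmem
    · exact (hittingBtwn_le ω).trans hlt.le
  · rcases (hittingBtwn_le (u := u) (s := s) (n := 0) (m := n) ω).lt_or_eq with hlt | heq
    · have hhit : hittingBtwn u s 0 n ω ∈ {k | u k ω ∈ s} :=
        hittingBtwn_mem_set_of_hittingBtwn_lt hlt
      exact (min_le_left _ _).trans (Nat.sInf_le hhit)
    · rw [heq]
      exact min_le_right _ _

lemma Int.exists_eq_zero_of_exists_nonpos {z : ℕ → ℤ} (h0 : 0 < z 0)
    (hstep : ∀ n, z n - 1 ≤ z (n + 1)) (hneg : ∃ k, z k ≤ 0) : ∃ k, z k = 0 := by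
  by_contra! hne
  have hpos : ∀ k, 0 < z k := fun k => by
    induction k with
    | zero => exact h0
    | succ k ih => have := hstep k; have := hne (k + 1); omega
  obtain ⟨k, hk⟩ := hneg
  exact (hpos k).not_ge hk

namespace RandomWalk

variable {G : Type*} {ξ X : ℕ → Ω → G}

def stepFiltration [MeasurableSpace G] (ξ : ℕ → Ω → G) (hξ : ∀ n, Measurable (ξ n)) :
    Filtration ℕ mΩ where
  seq n := ⨆ i < n, MeasurableSpace.comap (ξ i) inferInstance
  mono' _ _ hnm := biSup_mono fun _ hi => hi.trans_le hnm
  le' _ := iSup₂_le fun i _ => (hξ i).comap_le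

lemma measurable_stepFiltration_succ [MeasurableSpace G] (hξ : ∀ n, Measurable (ξ n)) (n : ℕ) :
    Measurable[stepFiltration ξ hξ (n + 1)] (ξ n) :=
  Measurable.of_comap_le <| le_iSup₂_of_le n (Nat.lt_succ_self n) le_rfl

lemma indep_stepFiltration [MeasurableSpace G] (hξ : ∀ n, Measurable (ξ n))
    (hind : iIndepFun ξ μ) (n : ℕ) :
    Indep (stepFiltration ξ hξ n) (MeasurableSpace.comap (ξ n) inferInstance) μ := by
  have := indep_iSup_of_disjoint (fun i => (hξ i).comap_le) hind
    (S := {i | i < n}) (T := {n}) (by simp)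
  simp only [Set.mem_ofPred_eq, Set.mem_singleton_iff, iSup_iSup_eq_left] at this
  exact this

lemma adapted_walk [AddCommGroup G] [MeasurableSpace G] [MeasurableAdd₂ G]
    (hξ : ∀ n, Measurable (ξ n)) (x₀ : G) (hX0 : ∀ ω, X 0 ω = x₀)
    (hX : ∀ n ω, X (n + 1) ω = X n ω + ξ n ω) :
    Adapted (stepFiltration ξ hξ) X := by
  intro n
  induction n with
  | zero => rw [funext hX0]; exact measurable_const
  | succ n ih =>
    rw [funext (hX n)]
    exact (ih.mono ((stepFiltration ξ hξ).mono n.le_succ) le_rfl).add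
      (measurable_stepFiltration_succ hξ n)

lemma exists_finite_ae_walk_mem [AddCommGroup G] {V : Finset G}
    (hV : ∀ n, ∀ᵐ ω ∂μ, ξ n ω ∈ V) (x₀ : G) (hX0 : ∀ ω, X 0 ω = x₀)
    (hX : ∀ n ω, X (n + 1) ω = X n ω + ξ n ω) (n : ℕ) :
    ∃ S : Set G, S.Finite ∧ ∀ᵐ ω ∂μ, X n ω ∈ S := by
  induction n with
  | zero => exact ⟨{x₀}, Set.finite_singleton x₀, ae_of_all _ hX0⟩
  | succ n ih =>
    obtain ⟨S, hS, hXS⟩ := ih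
    refine ⟨S + (V : Set G), hS.add V.finite_toSet, ?_⟩
    filter_upwards [hXS, hV n] with ω hXω hξω
    rw [hX]
    exact Set.add_mem_add hXω hξω

theorem martingale_comp_walk [IsProbabilityMeasure μ] [AddCommGroup G] [Countable G]
    [MeasurableSpace G] [MeasurableSingletonClass G] (hξ : ∀ n, Measurable (ξ n))
    (hind : iIndepFun ξ μ) {V : Finset G} {p : G → ℝ} (hV : ∀ n, ∀ᵐ ω ∂μ, ξ n ω ∈ V)
    (hp : ∀ n, ∀ v ∈ V, μ.real (ξ n ⁻¹' {v}) = p v)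
    (x₀ : G) (hX0 : ∀ ω, X 0 ω = x₀) (hX : ∀ n ω, X (n + 1) ω = X n ω + ξ n ω)
    {f : G → ℝ} (hf : ∀ x, ∑ v ∈ V, p v * f (x + v) = f x) :
    Martingale (fun n ω => f (X n ω)) (stepFiltration ξ hξ) μ := by
  have hXad := adapted_walk hξ x₀ hX0 hX
  have hint (n : ℕ) (v : G) : Integrable (fun ω => f (X n ω + v)) μ := by
    obtain ⟨S, hS, hXS⟩ := exists_finite_ae_walk_mem hV x₀ hX0 hX n
    exact integrable_comp_of_ae_mem_finite_s8 ((hXad n).mono ((stepFiltration ξ hξ).le n) le_rfl)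
      hS hXS fun x => f (x + v)
  refine martingale_of_setIntegral_eq_succ
    (fun n => ((measurable_of_countable f).comp (hXad n)).stronglyMeasurable)
    (fun n => by simpa using hint n 0) fun n s hs => ?_
  have hsm : MeasurableSet s := (stepFiltration ξ hξ).le n s hs
  -- the next step `ξ n` is independent of `stepFiltration ξ hξ n`, so splitting on its value
  -- `v` turns the new increment into the weights `p v`
  have hstep : ∀ v ∈ V, ∫ ω in ξ n ⁻¹' {v}, s.indicator (fun ω => f (X n ω + v)) ω ∂μ
      = p v * ∫ ω in s, f (X n ω + v) ∂μ := by
    intro v hv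
    have hmeas : Measurable[stepFiltration ξ hξ n] (s.indicator fun ω => f (X n ω + v)) :=
      ((measurable_of_countable fun x => f (x + v)).comp (hXad n)).indicator hs
    have hindep : IndepFun (ξ n) (s.indicator fun ω => f (X n ω + v)) μ :=
      indep_of_indep_of_le_right (indep_stepFiltration hξ hind n).symm hmeas.comap_le
    rw [hindep.setIntegral_preimage_eq_mul (hξ n) ((hint n v).indicator hsm).aestronglyMeasurable
      (measurableSet_singleton v), integral_indicator hsm, hp n v hv]
  have hsplit : s.indicator (fun ω => f (X (n + 1) ω)) =ᵐ[μ]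
      fun ω => ∑ v ∈ V, (ξ n ⁻¹' {v}).indicator (s.indicator fun ω => f (X n ω + v)) ω := by
    filter_upwards [hV n] with ω hω
    rw [Finset.sum_eq_single_of_mem (ξ n ω) hω fun v _ hv =>
      Set.indicator_of_notMem (fun h => hv h.symm) _,
      Set.indicator_of_mem (show ω ∈ ξ n ⁻¹' {ξ n ω} from rfl)]
    by_cases hωs : ω ∈ s <;> simp [hωs, hX]
  calc ∫ ω in s, f (X n ω) ∂μ = ∫ ω in s, ∑ v ∈ V, p v * f (X n ω + v) ∂μ := by simp_rw [hf]
    _ = ∑ v ∈ V, p v * ∫ ω in s, f (X n ω + v) ∂μ := by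
      rw [integral_finsetSum _ fun v _ => ((hint n v).const_mul (p v)).integrableOn]
      simp_rw [integral_const_mul]
    _ = ∫ ω in s, f (X (n + 1) ω) ∂μ := by
      rw [← integral_indicator hsm, integral_congr_ae hsplit, integral_finsetSum _
        fun v _ => ((hint n v).indicator hsm).indicator (hξ n (measurableSet_singleton v))]
      refine Finset.sum_congr rfl fun v hv => ?_
      rw [integral_indicator (hξ n (measurableSet_singleton v)), hstep v hv]

theorem integral_comp_walk_hittingBtwn [IsProbabilityMeasure μ] [AddCommGroup G] [Countable G]
    [MeasurableSpace G] [MeasurableSingletonClass G] (hξ : ∀ n, Measurable (ξ n))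
    (hind : iIndepFun ξ μ) {V : Finset G} {p : G → ℝ} (hV : ∀ n, ∀ᵐ ω ∂μ, ξ n ω ∈ V)
    (hp : ∀ n, ∀ v ∈ V, μ.real (ξ n ⁻¹' {v}) = p v)
    (x₀ : G) (hX0 : ∀ ω, X 0 ω = x₀) (hX : ∀ n ω, X (n + 1) ω = X n ω + ξ n ω)
    {f : G → ℝ} (hf : ∀ x, ∑ v ∈ V, p v * f (x + v) = f x) (S : Set G) (n : ℕ) :
    ∫ ω, f (X (hittingBtwn X S 0 n ω) ω) ∂μ = f x₀ := by
  have hτ := (adapted_walk hξ x₀ hX0 hX).isStoppingTime_hittingBtwn (n := 0) (n' := n)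
    S.to_countable.measurableSet
  have := (martingale_comp_walk hξ hind hV hp x₀ hX0 hX hf).integral_stoppedValue_eq hτ
    (N := n) fun ω => WithTop.coe_le_coe.2 (hittingBtwn_le ω)
  simp only [stoppedValue, WithTop.untopA, WithTop.untopD_coe, hX0] at this
  simpa using this

end RandomWalk

def lazySteps : Finset (ℤ × ℤ) := {(-1, 0), (1, -1), (0, 1)}

lemma ae_mem_lazySteps [IsProbabilityMeasure μ] {ξ : ℕ → Ω → ℤ × ℤ} (hξ : ∀ n, Measurable (ξ n))
    (hunif : ∀ n, ∀ v ∈ lazySteps, μ (ξ n ⁻¹' {v}) = 1 / 3) (n : ℕ) :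
    ∀ᵐ ω ∂μ, ξ n ω ∈ lazySteps := by
  refine ae_mem_of_sum_measure_preimage_singleton_eq_one (hξ n) ?_
  rw [Finset.sum_congr rfl (hunif n)]
  simp [lazySteps, ENNReal.mul_inv_cancel]

lemma measureReal_lazySteps {ξ : ℕ → Ω → ℤ × ℤ}
    (hunif : ∀ n, ∀ v ∈ lazySteps, μ (ξ n ⁻¹' {v}) = 1 / 3) (n : ℕ) :
    ∀ v ∈ lazySteps, μ.real (ξ n ⁻¹' {v}) = 1 / 3 := by
  intro v hv
  simp [measureReal_def, hunif n v hv]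

lemma ae_exists_fst_eq_zero [IsProbabilityMeasure μ] {ξ X : ℕ → Ω → ℤ × ℤ}
    (hξ : ∀ n, Measurable (ξ n)) (hind : iIndepFun ξ μ)
    (hunif : ∀ n, ∀ v ∈ lazySteps, μ (ξ n ⁻¹' {v}) = 1 / 3) {x₀ : ℤ × ℤ} (hx₀ : 0 < x₀.1)
    (hX0 : ∀ ω, X 0 ω = x₀) (hX : ∀ n ω, X (n + 1) ω = X n ω + ξ n ω) :
    ∀ᵐ ω ∂μ, ∃ k, (X k ω).1 = 0 := by
  have hV := ae_mem_lazySteps hξ hunif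
  have hmart := RandomWalk.martingale_comp_walk hξ hind hV (measureReal_lazySteps hunif) x₀ hX0 hX
    (f := fun x => (x.1 : ℝ)) fun x => by simp [lazySteps]; ring
  have hincr : ∀ᵐ ω ∂μ, ∀ n, (X n ω).1 - 1 ≤ (X (n + 1) ω).1 ∧ (X (n + 1) ω).1 ≤ (X n ω).1 + 1 := by
    filter_upwards [ae_all_iff.2 hV] with ω hω n
    have hstep : -1 ≤ (ξ n ω).1 ∧ (ξ n ω).1 ≤ 1 := by
      have := hω n
      simp only [lazySteps, Finset.mem_insert, Finset.mem_singleton] at this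
      rcases this with h | h | h <;> simp [h]
    rw [hX, Prod.fst_add]
    omega
  have hbdd : ∀ᵐ ω ∂μ, ∀ n, |((X (n + 1) ω).1 : ℝ) - (X n ω).1| ≤ (1 : ℝ≥0) := by
    filter_upwards [hincr] with ω hω n
    have := hω n
    rw [← Int.cast_sub, NNReal.coe_one, ← Int.cast_one, ← Int.cast_abs, Int.cast_le, abs_le]
    omega
  have hmove : ∀ᵐ ω ∂μ, ∃ᶠ n in atTop, (X (n + 1) ω).1 ≠ (X n ω).1 := by
    have hleft : ∑' n, μ (ξ n ⁻¹' {(-1, 0)}) = ∞ := by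
      simp [hunif _ _ (by simp [lazySteps] : ((-1, 0) : ℤ × ℤ) ∈ lazySteps)]
    filter_upwards [hind.ae_frequently_mem hξ (measurableSet_singleton _) hleft] with ω hω
    refine hω.mono fun n hn => ?_
    simp [hX, Set.mem_singleton_iff.1 hn]
  filter_upwards [hmart.ae_not_bddBelow_of_frequently_ne hbdd hmove, hincr] with ω hunbdd hω
  obtain ⟨_, ⟨k, rfl⟩, hk⟩ := not_bddBelow_iff.1 hunbdd 0
  exact Int.exists_eq_zero_of_exists_nonpos (z := fun n => (X n ω).1) (by rwa [hX0])
    (fun n => (hω n).1) ⟨k, by simpa using hk.le⟩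

end

theorem stmt_8_general
{Ω : Type*} [MeasurableSpace Ω] (μ : Measure Ω) [IsProbabilityMeasure μ]
    (a b : ℕ) (ha : 0 < a)
    (ξ : ℕ → Ω → ℤ × ℤ)
    (hmeas : ∀ n, Measurable (ξ n))
    (hindep : iIndepFun ξ μ)
    (hunif : ∀ n, ∀ v ∈ ({(-1, 0), (1, -1), (0, 1)} : Set (ℤ × ℤ)),
      μ {ω | ξ n ω = v} = 1 / 3)
    (A B : ℕ → Ω → ℤ)
    (hA0 : ∀ ω, A 0 ω = (a : ℤ)) (hB0 : ∀ ω, B 0 ω = (b : ℤ))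
    (hA : ∀ n ω, A (n + 1) ω = A n ω + (ξ n ω).1)
    (hB : ∀ n ω, B (n + 1) ω = B n ω + (ξ n ω).2)
(T : Ω → ℕ)
    (hT : ∀ ω, T ω = sInf {n | A n ω * B n ω = 0}) :
    ∀ n : ℕ,
      (∫ ω, ((A (min (T ω) n) ω ^ 2 * B (min (T ω) n) ω
          + A (min (T ω) n) ω * B (min (T ω) n) ω ^ 2 : ℤ) : ℝ) ∂μ)
        = (a : ℝ) * b * ((a : ℝ) + b) := by
  intro n
  have hlaw : ∀ n, ∀ v ∈ lazySteps, μ (ξ n ⁻¹' {v}) = 1 / 3 := fun n v hv =>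
    hunif n v (by simpa [lazySteps] using hv)
  set X : ℕ → Ω → ℤ × ℤ := fun k ω => (A k ω, B k ω)
  have hX0 : ∀ ω, X 0 ω = ((a : ℤ), (b : ℤ)) := fun ω => Prod.ext (hA0 ω) (hB0 ω)
  have hX : ∀ k ω, X (k + 1) ω = X k ω + ξ k ω := fun k ω => Prod.ext (hA k ω) (hB k ω)
  set φ : ℤ × ℤ → ℝ := fun x => ((x.1 ^ 2 * x.2 + x.1 * x.2 ^ 2 : ℤ) : ℝ)
  have hφ : ∀ x, ∑ v ∈ lazySteps, 1 / 3 * φ (x + v) = φ x := fun x => by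
    simp [φ, lazySteps]; ring
  have hhit := ae_exists_fst_eq_zero hmeas hindep hlaw (by simpa using ha) hX0 hX
  calc _ = ∫ ω, φ (X (hittingBtwn X {x | x.1 * x.2 = 0} 0 n ω) ω) ∂μ := by
        refine integral_congr_ae ?_
        filter_upwards [hhit] with ω ⟨k, hk⟩
        have hkS : (X k ω).1 * (X k ω).2 = 0 := by rw [hk, zero_mul]
        rw [hittingBtwn_zero_eq_min_sInf ⟨k, hkS⟩, hT]
        rfl
    _ = φ ((a : ℤ), (b : ℤ)) := RandomWalk.integral_comp_walk_hittingBtwn hmeas hindep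
        (ae_mem_lazySteps hmeas hlaw) (measureReal_lazySteps hlaw) _ hX0 hX hφ _ n
    _ = (a : ℝ) * b * ((a : ℝ) + b) := by simp [φ]; ring

/-- For the truncated stopping time `T_n = min (T, n)`,
`E[A(T_n)² * B(T_n) + A(T_n) * B(T_n)²] = a * b * (a + b)`. -/
theorem stmt_8
{Ω : Type*} [MeasurableSpace Ω] (μ : Measure Ω) [IsProbabilityMeasure μ]
    (a b : ℕ) (ha : 0 < a) (hb : 0 < b)
    (ξ : ℕ → Ω → ℤ × ℤ)
    (hmeas : ∀ n, Measurable (ξ n))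
    (hindep : iIndepFun ξ μ)
    (hunif : ∀ n, ∀ v ∈ ({(-1, 0), (1, -1), (0, 1)} : Set (ℤ × ℤ)),
      μ {ω | ξ n ω = v} = 1 / 3)
    (A B : ℕ → Ω → ℤ)
    (hA0 : ∀ ω, A 0 ω = (a : ℤ)) (hB0 : ∀ ω, B 0 ω = (b : ℤ))
    (hA : ∀ n ω, A (n + 1) ω = A n ω + (ξ n ω).1)
    (hB : ∀ n ω, B (n + 1) ω = B n ω + (ξ n ω).2)
(T : Ω → ℕ)
    (hT : ∀ ω, T ω = sInf {n | A n ω * B n ω = 0}) :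
    ∀ n : ℕ,
      (∫ ω, ((A (min (T ω) n) ω ^ 2 * B (min (T ω) n) ω
          + A (min (T ω) n) ω * B (min (T ω) n) ω ^ 2 : ℤ) : ℝ) ∂μ)
        = (a : ℝ) * b * ((a : ℝ) + b) :=
  stmt_8_general μ a b ha ξ hmeas hindep hunif A B hA0 hB0 hA hB T hT
end
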